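/- arXiv:2511.22271 — 11 statements merged into one kernel-verified Lean document; each statement's English description precedes it below -/
import Mathlib

section
/- The cut-rank function of a finite simple graph is submodular: for all subsets A, B of vertices, cutrk(A ∪ B) + cutrk(A ∩ B) ≤ cutrk(A) + cutrk(B). -/
/-!
Put `Z_X := {v : V → F₂ | v = 0 on X}` and let `W_Y` be the span of the columns indexed by `Y` of
the adjacency matrix. Then `cutrk A` is the dimension of the image of `W_{Aᶜ}` in the quotient by
`Z_A`, i.e. `dim W − dim (W ⊓ Z)`. This relative rank grows with `W`, shrinks with `Z`, and is
submodular in the pair `(Z, W)` by the modular law `dim P + dim Q = dim (P ⊔ Q) + dim (P ⊓ Q)`,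
applied to `W₁, W₂` and to `W₁ ⊓ Z₁, W₂ ⊓ Z₂`. Since `Z_{A ∪ B} = Z_A ⊓ Z_B`,
`Z_{A ∩ B} ≥ Z_A ⊔ Z_B`, `W_{(A ∩ B)ᶜ} = W_{Aᶜ} ⊔ W_{Bᶜ}` and `W_{(A ∪ B)ᶜ} ≤ W_{Aᶜ} ⊓ W_{Bᶜ}`,
submodularity of the cut-rank follows.
-/

open scoped Classical

/-- The cut-rank of a set `A` of vertices of a finite simple graph `G`:
the `F₂`-rank of the bipartite adjacency matrix between `A` and its complement. -/
noncomputable def cutrk {V : Type*} [Fintype V] [DecidableEq V]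
    (G : SimpleGraph V) (A : Finset V) : ℕ :=
  Matrix.rank (fun (a : ↥A) (b : ↥(Aᶜ)) => if G.Adj a.1 b.1 then (1 : ZMod 2) else 0)

open Module

namespace Submodule

section Pi

variable {ι R : Type*} {φ : ι → Type*} [Semiring R] [∀ i, AddCommMonoid (φ i)]
  [∀ i, Module R (φ i)]

theorem union_pi (s₁ s₂ : Set ι) (p : (i : ι) → Submodule R (φ i)) :
    pi (s₁ ∪ s₂) p = pi s₁ p ⊓ pi s₂ p :=
  SetLike.coe_injective Set.union_pi

theorem pi_mono' {s₁ s₂ : Set ι} {p q : (i : ι) → Submodule R (φ i)} (h : ∀ i ∈ s₂, p i ≤ q i)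
    (h' : s₂ ⊆ s₁) : pi s₁ p ≤ pi s₂ q :=
  Set.pi_mono' h h'

end Pi

variable {K E F : Type*} [DivisionRing K] [AddCommGroup E] [Module K E] [AddCommGroup F]
  [Module K F]

theorem finrank_map_add_finrank_inf_ker (f : E →ₗ[K] F) (W : Submodule K E)
    [FiniteDimensional K W] :
    finrank K (W.map f) + finrank K ↥(W ⊓ LinearMap.ker f) = finrank K W := by
  have h := LinearMap.finrank_range_add_finrank_ker (f.domRestrict W)
  rw [LinearMap.range_domRestrict, LinearMap.ker_domRestrict] at h
  rwa [← (comapSubtypeEquivOfLe (inf_le_left : W ⊓ LinearMap.ker f ≤ W)).finrank_eq, comap_inf,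
    comap_subtype_self, top_inf_eq]

variable [FiniteDimensional K E]

theorem finrank_map_mkQ_add_finrank_inf (Z W : Submodule K E) :
    finrank K (W.map Z.mkQ) + finrank K ↥(W ⊓ Z) = finrank K W := by
  have h := finrank_map_add_finrank_inf_ker Z.mkQ W
  rwa [ker_mkQ] at h

theorem finrank_map_eq_finrank_map_mkQ_ker (f : E →ₗ[K] F) (W : Submodule K E) :
    finrank K (W.map f) = finrank K (W.map (LinearMap.ker f).mkQ) := by
  have := finrank_map_add_finrank_inf_ker f W
  have := finrank_map_mkQ_add_finrank_inf (LinearMap.ker f) W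
  omega

theorem finrank_map_mkQ_le_of_le {Z Z' W W' : Submodule K E} (hZ : Z ≤ Z') (hW : W' ≤ W) :
    finrank K (W'.map Z'.mkQ) ≤ finrank K (W.map Z.mkQ) := by
  have hZW := finrank_map_mkQ_add_finrank_inf Z W
  have hZ'W := finrank_map_mkQ_add_finrank_inf Z' W
  have := finrank_mono (inf_le_inf_left W hZ)
  have := finrank_mono (map_mono (f := Z'.mkQ) hW)
  omega

theorem finrank_map_mkQ_sup_add_finrank_map_mkQ_inf_le (Z₁ Z₂ W₁ W₂ : Submodule K E) :
    finrank K ((W₁ ⊔ W₂).map (Z₁ ⊔ Z₂).mkQ) + finrank K ((W₁ ⊓ W₂).map (Z₁ ⊓ Z₂).mkQ)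
      ≤ finrank K (W₁.map Z₁.mkQ) + finrank K (W₂.map Z₂.mkQ) := by
  have h₁ := finrank_map_mkQ_add_finrank_inf Z₁ W₁
  have h₂ := finrank_map_mkQ_add_finrank_inf Z₂ W₂
  have hsup := finrank_map_mkQ_add_finrank_inf (Z₁ ⊔ Z₂) (W₁ ⊔ W₂)
  have hinf := finrank_map_mkQ_add_finrank_inf (Z₁ ⊓ Z₂) (W₁ ⊓ W₂)
  have hW := finrank_sup_add_finrank_inf_eq W₁ W₂
  have hWZ := finrank_sup_add_finrank_inf_eq (W₁ ⊓ Z₁) (W₂ ⊓ Z₂)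
  have hle : W₁ ⊓ Z₁ ⊔ W₂ ⊓ Z₂ ≤ (W₁ ⊔ W₂) ⊓ (Z₁ ⊔ Z₂) :=
    sup_le (inf_le_inf le_sup_left le_sup_left) (inf_le_inf le_sup_right le_sup_right)
  rw [inf_inf_inf_comm] at hWZ
  have := finrank_mono hle
  omega

end Submodule

namespace Matrix

open Submodule

variable {m n K : Type*} [Field K]

theorem ker_funLeft_subtype_val (X : Finset m) :
    LinearMap.ker (LinearMap.funLeft K K ((↑) : X → m)) = pi (X : Set m) fun _ => ⊥ := by
  ext v
  simp only [LinearMap.mem_ker, mem_pi, mem_bot, funext_iff, LinearMap.funLeft_apply,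
    Pi.zero_apply, Subtype.forall, Finset.mem_coe]

variable [Fintype m]

theorem rank_submatrix_eq_finrank_map_mkQ (M : Matrix m n K) (X : Finset m) (Y : Finset n) :
    (M.submatrix ((↑) : X → m) ((↑) : Y → n)).rank
      = finrank K ((span K (M.col '' Y)).map (pi (X : Set m) fun _ => ⊥).mkQ) := by
  have hcols : Set.range (M.submatrix ((↑) : X → m) ((↑) : Y → n)).col
      = LinearMap.funLeft K K ((↑) : X → m) '' (M.col '' Y) := by
    rw [show (M.submatrix ((↑) : X → m) ((↑) : Y → n)).col
        = LinearMap.funLeft K K ((↑) : X → m) ∘ M.col ∘ ((↑) : Y → n) from rfl,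
      Set.range_comp, Set.range_comp, Subtype.range_coe]
  rw [rank_eq_finrank_span_cols, hcols, ← map_span, finrank_map_eq_finrank_map_mkQ_ker,
    ker_funLeft_subtype_val]

variable [DecidableEq m] [DecidableEq n]

theorem rank_submatrix_inter_union_add_rank_submatrix_union_inter_le (M : Matrix m n K)
    (X₁ X₂ : Finset m) (Y₁ Y₂ : Finset n) :
    (M.submatrix ((↑) : ↥(X₁ ∩ X₂) → m) ((↑) : ↥(Y₁ ∪ Y₂) → n)).rank
      + (M.submatrix ((↑) : ↥(X₁ ∪ X₂) → m) ((↑) : ↥(Y₁ ∩ Y₂) → n)).rank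
      ≤ (M.submatrix ((↑) : X₁ → m) ((↑) : Y₁ → n)).rank
        + (M.submatrix ((↑) : X₂ → m) ((↑) : Y₂ → n)).rank := by
  simp only [rank_submatrix_eq_finrank_map_mkQ]
  refine le_trans (add_le_add (finrank_map_mkQ_le_of_le ?_ ?_) (finrank_map_mkQ_le_of_le ?_ ?_))
    (finrank_map_mkQ_sup_add_finrank_map_mkQ_inf_le _ _ _ _)
  · rw [Finset.coe_inter]
    exact sup_le (pi_mono' (fun _ _ => le_rfl) Set.inter_subset_left)
      (pi_mono' (fun _ _ => le_rfl) Set.inter_subset_right)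
  · rw [Finset.coe_union, Set.image_union, span_union]
  · rw [Finset.coe_union, union_pi]
  · exact le_inf (span_mono (Set.image_mono (Finset.coe_subset.2 Finset.inter_subset_left)))
      (span_mono (Set.image_mono (Finset.coe_subset.2 Finset.inter_subset_right)))

end Matrix

theorem cutrk_eq_rank_submatrix {V : Type*} [Fintype V] [DecidableEq V] (G : SimpleGraph V)
    (A : Finset V) :
    cutrk G A = ((G.adjMatrix (ZMod 2)).submatrix ((↑) : A → V) ((↑) : ↥Aᶜ → V)).rank :=
  rfl

/-- Submodularity of the cut-rank function. -/
theorem cutrk_submodular {V : Type*} [Fintype V] [DecidableEq V]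
    (G : SimpleGraph V) (A B : Finset V) :
    cutrk G (A ∪ B) + cutrk G (A ∩ B) ≤ cutrk G A + cutrk G B := by
  simp only [cutrk_eq_rank_submatrix]
  rw [Finset.compl_union, Finset.compl_inter, add_comm]
  exact Matrix.rank_submatrix_inter_union_add_rank_submatrix_union_inter_le _ A B Aᶜ Bᶜ
end

section
/- If μ : 2^V → ℕ satisfies symmetry, linear boundedness and submodularity, and C ⊆ V satisfies μ(C\{a}) < μ(C) for every a ∈ C, then μ(C) = |C|. -/
/-- For a symmetric, linearly bounded, submodular function `μ`, if removing any
element of `C` strictly decreases `μ`, then `C` is full-`μ`-rank. -/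
theorem stmt_4 {V : Type*} [Fintype V] [DecidableEq V] (μ : Finset V → ℕ)
    (hsym : ∀ A : Finset V, μ Aᶜ = μ A)
    (hbound : ∀ A : Finset V, μ A ≤ A.card)
    (hsub : ∀ A B : Finset V, μ (A ∪ B) + μ (A ∩ B) ≤ μ A + μ B)
    (C : Finset V) (hC : ∀ a ∈ C, μ (C.erase a) < μ C) :
    μ C = C.card := by
  -- μ increases by at most 1 when adding an element:
  have hstep : ∀ (D : Finset V) (a : V), a ∈ D → μ D ≤ μ (D.erase a) + 1 := by
    intro D a ha
    have h := hsub (D.erase a) {a}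
    have hu : D.erase a ∪ {a} = D := by
      ext x
      simp only [Finset.mem_union, Finset.mem_erase, Finset.mem_singleton]
      constructor
      · rintro (⟨_, h⟩ | rfl) <;> first | exact h | exact ha
      · intro hx
        by_cases hxa : x = a
        · exact Or.inr hxa
        · exact Or.inl ⟨hxa, hx⟩
    have hi : D.erase a ∩ {a} = ∅ := by
      ext x
      simp only [Finset.mem_inter, Finset.mem_erase, Finset.mem_singleton,
        Finset.notMem_empty, iff_false]
      rintro ⟨⟨hx, _⟩, rfl⟩; exact hx rfl
    rw [hu, hi] at h
    have hs : μ ({a} : Finset V) ≤ 1 := by simpa using hbound {a}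
    omega
  revert hC
  induction C using Finset.strongInduction with
  | _ C ih =>
    intro hC
    rcases C.eq_empty_or_nonempty with rfl | ⟨a, ha⟩
    · have := hbound (∅ : Finset V); simpa using this
    · have heq : μ C = μ (C.erase a) + 1 := by
        have h1 := hC a ha
        have h2 := hstep C a ha
        omega
      -- the hypothesis transfers to C.erase a
      have h' : ∀ b ∈ C.erase a, μ ((C.erase a).erase b) < μ (C.erase a) := by
        intro b hb
        have hba : b ≠ a := (Finset.mem_erase.mp hb).1
        have hbC : b ∈ C := (Finset.mem_erase.mp hb).2
        have h := hsub (C.erase a) (C.erase b)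
        have hu : C.erase a ∪ C.erase b = C := by
          ext x
          simp only [Finset.mem_union, Finset.mem_erase]
          constructor
          · rintro (⟨_, h⟩ | ⟨_, h⟩) <;> exact h
          · intro hx
            by_cases hxa : x = a
            · exact Or.inr ⟨by rw [hxa]; exact fun h => hba h.symm, hx⟩
            · exact Or.inl ⟨hxa, hx⟩
        have hi : C.erase a ∩ C.erase b = (C.erase a).erase b := by
          ext x
          simp only [Finset.mem_inter, Finset.mem_erase]
          tauto
        rw [hu, hi] at h
        have hb' := hC b hbC
        omega
      have hsub' : C.erase a ⊂ C := Finset.erase_ssubset ha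
      have ihr := ih (C.erase a) hsub' h'
      have hcard : (C.erase a).card = C.card - 1 := Finset.card_erase_of_mem ha
      have hpos : 1 ≤ C.card := Finset.card_pos.mpr ⟨a, ha⟩
      omega
end

section
/- Let μ : 2^V → ℕ satisfy symmetry, linear boundedness and submodularity. For any A ⊆ V there exists a chain of subsets B_0 ⊊ B_1 ⊊ ... ⊊ B_{|A|-μ(A)} = A with |B_i| = μ(A) + i and μ(B_i) ≥ μ(A) for all i; in particular B_0 satisfies μ(B_0) = |B_0|. -/
/-!
Peel `A` one element at a time while keeping `μ ≥ μ(A)`. Dropping an element lowers `μ` by at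
most one, so this is automatic as long as `μ` is above `μ(A)`. At level exactly `μ(A)` with
`|B| > μ(B)`, some element can be dropped without lowering `μ`: otherwise submodularity applied
to `insert x C` and `B.erase x` shows that `μ` strictly increases along every insertion inside
`B`, forcing `μ(B) ≥ |B|`. The chain stops at size `μ(A)`, where `μ(A) ≤ μ(B_0) ≤ |B_0| = μ(A)`.
-/

namespace Finset

variable {α : Type*} [DecidableEq α]

theorem exists_ssubset_chain_of_exists_erase (P : Finset α → Prop) (k : ℕ)
    (hstep : ∀ C : Finset α, P C → k < C.card → ∃ x ∈ C, P (C.erase x)) :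
    ∀ (n : ℕ) (A : Finset α), P A → A.card = k + n →
      ∃ B : ℕ → Finset α, B n = A ∧ (∀ i < n, B i ⊂ B (i + 1)) ∧
        ∀ i ≤ n, (B i).card = k + i ∧ P (B i) := by
  intro n
  induction n with
  | zero =>
    intro A hA hcard
    exact ⟨fun _ => A, rfl, by simp, fun i hi => by
      obtain rfl := Nat.le_zero.mp hi
      exact ⟨hcard, hA⟩⟩
  | succ n ih =>
    intro A hA hcard
    obtain ⟨x, hxA, hPx⟩ := hstep A hA (by omega)
    obtain ⟨B, hBn, hchain, hB⟩ :=
      ih (A.erase x) hPx (by rw [card_erase_of_mem hxA]; omega)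
    refine ⟨fun i => if i ≤ n then B i else A, by simp, fun i hi => ?_, fun i hi => ?_⟩
    · rcases Nat.lt_succ_iff_lt_or_eq.mp hi with hlt | rfl
      · simpa [hlt.le, Nat.succ_le_of_lt hlt] using hchain i hlt
      · simpa [hBn] using erase_ssubset hxA
    · rcases Nat.lt_or_eq_of_le hi with hlt | rfl
      · simpa [Nat.lt_succ_iff.mp hlt] using hB i (by omega)
      · simpa using ⟨hcard, hA⟩

end Finset

section SubmodularRank

variable {V : Type*} [DecidableEq V] {μ : Finset V → ℕ}

theorem le_apply_erase_add_one (hbound : ∀ A : Finset V, μ A ≤ A.card)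
    (hsub : ∀ A B : Finset V, μ (A ∪ B) + μ (A ∩ B) ≤ μ A + μ B) (B : Finset V) (x : V) :
    μ B ≤ μ (B.erase x) + 1 := by
  by_cases hx : x ∈ B
  · have h := hsub (B.erase x) {x}
    rw [Finset.erase_union_eq x B hx, show B.erase x ∩ {x} = ∅ by simp] at h
    have := hbound {x}
    rw [Finset.card_singleton] at this
    omega
  · rw [Finset.erase_eq_of_notMem hx]
    omega

theorem card_le_apply_of_forall_apply_erase_lt
    (hsub : ∀ A B : Finset V, μ (A ∪ B) + μ (A ∩ B) ≤ μ A + μ B) {B : Finset V}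
    (hB : ∀ x ∈ B, μ (B.erase x) < μ B) : ∀ C ⊆ B, C.card ≤ μ C := by
  intro C
  induction C using Finset.induction_on with
  | empty => simp
  | @insert x C hxC ih =>
    intro hCB
    have hxB : x ∈ B := hCB (Finset.mem_insert_self x C)
    have hCB' : C ⊆ B := (Finset.subset_insert x C).trans hCB
    have hunion : insert x C ∪ B.erase x = B := by grind
    have hinter : insert x C ∩ B.erase x = C := by grind
    have h := hsub (insert x C) (B.erase x)
    rw [hunion, hinter] at h
    have := hB x hxB
    have := ih hCB'
    rw [Finset.card_insert_of_notMem hxC]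
    omega

theorem exists_mem_le_apply_erase (hbound : ∀ A : Finset V, μ A ≤ A.card)
    (hsub : ∀ A B : Finset V, μ (A ∪ B) + μ (A ∩ B) ≤ μ A + μ B) {m : ℕ} {B : Finset V}
    (hm : m ≤ μ B) (hcard : m < B.card) : ∃ x ∈ B, m ≤ μ (B.erase x) := by
  rcases hm.lt_or_eq with hlt | rfl
  · obtain ⟨x, hx⟩ := Finset.card_pos.mp (m.zero_le.trans_lt hcard)
    exact ⟨x, hx, by have := le_apply_erase_add_one hbound hsub B x; omega⟩
  · by_contra! h
    have := card_le_apply_of_forall_apply_erase_lt hsub h B subset_rfl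
    omega

end SubmodularRank

theorem stmt_5_general {V : Type*} [DecidableEq V] (μ : Finset V → ℕ)
    (hbound : ∀ A : Finset V, μ A ≤ A.card)
    (hsub : ∀ A B : Finset V, μ (A ∪ B) + μ (A ∩ B) ≤ μ A + μ B)
    (A : Finset V) :
    ∃ B : ℕ → Finset V,
      B (A.card - μ A) = A ∧
      (∀ i, i < A.card - μ A → B i ⊂ B (i + 1)) ∧
      (∀ i, i ≤ A.card - μ A → (B i).card = μ A + i ∧ μ A ≤ μ (B i)) ∧
      μ (B 0) = (B 0).card := by
  obtain ⟨B, htop, hchain, hB⟩ :=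
    Finset.exists_ssubset_chain_of_exists_erase (fun C => μ A ≤ μ C) (μ A)
      (fun C hC hcard => exists_mem_le_apply_erase hbound hsub hC hcard)
      (A.card - μ A) A le_rfl (by have := hbound A; omega)
  refine ⟨B, htop, hchain, hB, ?_⟩
  obtain ⟨hcard0, hμ0⟩ := hB 0 (Nat.zero_le _)
  have := hbound (B 0)
  omega

/-- For a symmetric, linearly bounded, submodular function `μ` and any `A`, there is a
chain `B_0 ⊊ B_1 ⊊ ... ⊊ B_{|A| - μ(A)} = A` with `|B_i| = μ(A) + i` and `μ(B_i) ≥ μ(A)`;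
in particular `B_0` is full-`μ`-rank. -/
theorem stmt_5 {V : Type*} [Fintype V] [DecidableEq V] (μ : Finset V → ℕ)
    (hsym : ∀ A : Finset V, μ Aᶜ = μ A)
    (hbound : ∀ A : Finset V, μ A ≤ A.card)
    (hsub : ∀ A B : Finset V, μ (A ∪ B) + μ (A ∩ B) ≤ μ A + μ B)
    (A : Finset V) :
    ∃ B : ℕ → Finset V,
      B (A.card - μ A) = A ∧
      (∀ i, i < A.card - μ A → B i ⊂ B (i + 1)) ∧
      (∀ i, i ≤ A.card - μ A → (B i).card = μ A + i ∧ μ A ≤ μ (B i)) ∧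
      μ (B 0) = (B 0).card :=
  stmt_5_general μ hbound hsub A
end

section
/- Let μ : 2^V → ℕ satisfy symmetry, linear boundedness and submodularity. For any A ⊆ V with μ(A) = |A|, there exists a subset B of V\A with |B| = |A| and μ(B) = |B|. -/
/-- If removing any element of `B` strictly decreases `μ`, then `μ B ≥ |B|`. -/
lemma aux_full_rank {V : Type*} [DecidableEq V] (μ : Finset V → ℕ)
    (hsub : ∀ A B : Finset V, μ (A ∪ B) + μ (A ∩ B) ≤ μ A + μ B) :
    ∀ B : Finset V, (∀ x ∈ B, μ (B.erase x) + 1 ≤ μ B) → B.card ≤ μ B := by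
  intro B
  induction B using Finset.strongInduction with
  | _ B ih =>
    intro h
    rcases B.eq_empty_or_nonempty with rfl | ⟨x, hx⟩
    · simp
    have hB' : ∀ y ∈ B.erase x, μ ((B.erase x).erase y) + 1 ≤ μ (B.erase x) := by
      intro y hy
      have hyx : y ≠ x := Finset.ne_of_mem_erase hy
      have hyB : y ∈ B := Finset.mem_of_mem_erase hy
      set S := (B.erase x).erase y with hS
      have key := hsub (S ∪ {x}) (B.erase x)
      have h1 : (S ∪ {x}) ∪ B.erase x = B := by
        ext z
        simp only [hS, Finset.mem_union, Finset.mem_erase, Finset.mem_singleton]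
        constructor
        · rintro ((⟨-, -, hz⟩ | rfl) | ⟨-, hz⟩) <;> [exact hz; exact hx; exact hz]
        · intro hz
          by_cases hzx : z = x
          · exact Or.inl (Or.inr hzx)
          · exact Or.inr ⟨hzx, hz⟩
      have h2 : (S ∪ {x}) ∩ B.erase x = S := by
        ext z
        simp only [hS, Finset.mem_inter, Finset.mem_union, Finset.mem_erase,
          Finset.mem_singleton]
        constructor
        · rintro ⟨(hz | rfl), hz2⟩
          · exact hz
          · exact absurd hz2.1 (by simp)
        · intro hz
          exact ⟨Or.inl hz, hz.2⟩
      have h3 : S ∪ {x} = B.erase y := by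
        ext z
        simp only [hS, Finset.mem_union, Finset.mem_erase, Finset.mem_singleton]
        constructor
        · rintro (⟨hzy, -, hz⟩ | rfl)
          · exact ⟨hzy, hz⟩
          · exact ⟨hyx.symm, hx⟩
        · rintro ⟨hzy, hz⟩
          by_cases hzx : z = x
          · exact Or.inr hzx
          · exact Or.inl ⟨hzy, hzx, hz⟩
      rw [h1, h2, h3] at key
      have hy' := h y hyB
      omega
    have hsub' : B.erase x ⊂ B := Finset.erase_ssubset hx
    have := ih (B.erase x) hsub' hB'
    have hcard : (B.erase x).card + 1 = B.card := Finset.card_erase_add_one hx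
    have := h x hx
    omega

/-- Descent lemma: from any `B` with `μ B ≥ k` we can extract `C ⊆ B` with
`|C| = k` and `μ C = k`. -/
lemma aux_descent {V : Type*} [DecidableEq V] (μ : Finset V → ℕ)
    (hbound : ∀ A : Finset V, μ A ≤ A.card)
    (hsub : ∀ A B : Finset V, μ (A ∪ B) + μ (A ∩ B) ≤ μ A + μ B) :
    ∀ B : Finset V, ∀ k, k ≤ μ B → ∃ C, C ⊆ B ∧ C.card = k ∧ μ C = k := by
  intro B
  induction B using Finset.strongInduction with
  | _ B ih =>
    intro k hk
    have hkB : k ≤ B.card := hk.trans (hbound B)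
    rcases eq_or_lt_of_le hkB with heq | hlt
    · exact ⟨B, subset_rfl, heq.symm, le_antisymm (heq ▸ hbound B) hk⟩
    · -- find x ∈ B with k ≤ μ (B.erase x)
      have hne : B.Nonempty := Finset.card_pos.mp (lt_of_le_of_lt (Nat.zero_le k) hlt)
      have hstep : ∃ x ∈ B, k ≤ μ (B.erase x) := by
        rcases lt_or_ge k (μ B) with hgt | hle
        · obtain ⟨x, hx⟩ := hne
          have key := hsub (B.erase x) {x}
          have h1 : B.erase x ∪ {x} = B := by
            ext z
            simp only [Finset.mem_union, Finset.mem_erase, Finset.mem_singleton]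
            constructor
            · rintro (⟨-, hz⟩ | rfl) <;> [exact hz; exact hx]
            · intro hz
              by_cases hzx : z = x
              · exact Or.inr hzx
              · exact Or.inl ⟨hzx, hz⟩
          have h2 : B.erase x ∩ {x} = ∅ := by
            ext z
            simp only [Finset.mem_inter, Finset.mem_erase, Finset.mem_singleton,
              Finset.notMem_empty, iff_false]
            rintro ⟨⟨hz, -⟩, rfl⟩
            exact hz rfl
          rw [h1, h2] at key
          have hx1 : μ {x} ≤ 1 := by simpa using hbound {x}
          exact ⟨x, hx, by omega⟩
        · -- μ B = k < B.card, so not all erasures drop μ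
          have hμB : μ B = k := le_antisymm hle hk
          by_contra hcon
          push_neg at hcon
          have hall : ∀ x ∈ B, μ (B.erase x) + 1 ≤ μ B := by
            intro x hx
            have := hcon x hx
            omega
          have := aux_full_rank μ hsub B hall
          omega
      obtain ⟨x, hx, hkx⟩ := hstep
      obtain ⟨C, hC1, hC2, hC3⟩ := ih (B.erase x) (Finset.erase_ssubset hx) k hkx
      exact ⟨C, hC1.trans (Finset.erase_subset _ _), hC2, hC3⟩

/-- For a symmetric, linearly bounded, submodular function `μ`, for every
full-`μ`-rank set `A` there is a disjoint full-`μ`-rank set of the same cardinality. -/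
theorem stmt_6 {V : Type*} [Fintype V] [DecidableEq V] (μ : Finset V → ℕ)
    (hsym : ∀ A : Finset V, μ Aᶜ = μ A)
    (hbound : ∀ A : Finset V, μ A ≤ A.card)
    (hsub : ∀ A B : Finset V, μ (A ∪ B) + μ (A ∩ B) ≤ μ A + μ B)
    (A : Finset V) (hA : μ A = A.card) :
    ∃ B : Finset V, B ⊆ Aᶜ ∧ B.card = A.card ∧ μ B = B.card := by
  have h : A.card ≤ μ Aᶜ := by rw [hsym A, hA]
  obtain ⟨C, hC1, hC2, hC3⟩ := aux_descent μ hbound hsub Aᶜ A.card h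
  exact ⟨C, hC1, hC2, by rw [hC3, hC2]⟩
end

section
/- If L is a minimal local set of a finite simple graph G with at least two distinct generators D_0 ≠ D_1 (i.e. D_0 ∪ Odd(D_0) = D_1 ∪ Odd(D_1) = L), then L = D_0 ∪ D_1 and D_0 Δ D_1 also generates L. -/
open scoped Classical

/-- The odd neighborhood of a set `D` of vertices: the vertices having an odd
number of neighbors in `D`. -/
noncomputable def oddN {V : Type*} [Fintype V] (G : SimpleGraph V) (D : Finset V) :
    Finset V :=
  Finset.univ.filter fun v => Odd (D.filter fun d => G.Adj v d).card

/-- A local set of `G`: a set of the form `D ∪ Odd(D)` for some nonempty `D`. -/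
noncomputable def IsLocalSet {V : Type*} [Fintype V] (G : SimpleGraph V)
    (L : Finset V) : Prop :=
  ∃ D : Finset V, D.Nonempty ∧ L = D ∪ oddN G D

/-- A minimal local set: a local set containing no other local set. -/
noncomputable def IsMinimalLocalSet {V : Type*} [Fintype V] (G : SimpleGraph V)
    (L : Finset V) : Prop :=
  IsLocalSet G L ∧ ∀ L' : Finset V, IsLocalSet G L' → L' ⊆ L → L' = L

lemma card_symmDiff_parity {V : Type*} [DecidableEq V] (s t : Finset V) :
    Odd (symmDiff s t).card ↔ (Odd s.card ↔ ¬ Odd t.card) := by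
  have h1 : symmDiff s t = (s ∪ t) \ (s ∩ t) := symmDiff_eq_sup_sdiff_inf s t
  have h2 : (s ∪ t).card + (s ∩ t).card = s.card + t.card :=
    Finset.card_union_add_card_inter s t
  have h3 : (s ∩ t) ⊆ (s ∪ t) := (Finset.inter_subset_left).trans Finset.subset_union_left
  have h4 : ((s ∪ t) \ (s ∩ t)).card = (s ∪ t).card - (s ∩ t).card :=
    Finset.card_sdiff_of_subset h3
  have h5 : (s ∩ t).card ≤ (s ∪ t).card := Finset.card_le_card h3
  rw [h1, h4]
  rw [Nat.odd_iff, Nat.odd_iff, Nat.odd_iff]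
  omega

lemma oddN_symmDiff {V : Type*} [Fintype V] (G : SimpleGraph V) (A B : Finset V) :
    oddN G (symmDiff A B) = symmDiff (oddN G A) (oddN G B) := by
  ext v
  have hf : (symmDiff A B).filter (fun d => G.Adj v d)
      = symmDiff (A.filter (fun d => G.Adj v d)) (B.filter (fun d => G.Adj v d)) := by
    ext d
    simp only [Finset.mem_filter, Finset.mem_symmDiff]
    tauto
  simp only [oddN, Finset.mem_filter, Finset.mem_univ, true_and, Finset.mem_symmDiff, hf,
    card_symmDiff_parity]
  tauto

/-- If a minimal local set `L` has two distinct generators `D₀ ≠ D₁`, then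
`L = D₀ ∪ D₁` and the symmetric difference `D₀ Δ D₁` also generates `L`. -/
theorem stmt_8 {V : Type*} [Fintype V] (G : SimpleGraph V) (L D₀ D₁ : Finset V)
    (hL : IsMinimalLocalSet G L)
    (hD₀ : D₀.Nonempty) (h₀ : L = D₀ ∪ oddN G D₀)
    (hD₁ : D₁.Nonempty) (h₁ : L = D₁ ∪ oddN G D₁)
    (hne : D₀ ≠ D₁) :
    L = D₀ ∪ D₁ ∧
      (symmDiff D₀ D₁).Nonempty ∧ L = symmDiff D₀ D₁ ∪ oddN G (symmDiff D₀ D₁) := by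
  set S := symmDiff D₀ D₁ with hS
  have hSne : S.Nonempty := by
    rw [Finset.nonempty_iff_ne_empty]
    intro h
    rw [hS] at h
    exact hne (symmDiff_eq_bot.mp (by rw [h]; rfl))
  have hodd : oddN G S = symmDiff (oddN G D₀) (oddN G D₁) := oddN_symmDiff G D₀ D₁
  have hsub : S ∪ oddN G S ⊆ L := by
    intro v hv
    rcases Finset.mem_union.mp hv with hv | hv
    · rcases Finset.mem_symmDiff.mp hv with ⟨h, _⟩ | ⟨h, _⟩
      · exact h₀ ▸ Finset.mem_union_left _ h
      · exact h₁ ▸ Finset.mem_union_left _ h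
    · rw [hodd] at hv
      rcases Finset.mem_symmDiff.mp hv with ⟨h, _⟩ | ⟨h, _⟩
      · exact h₀ ▸ Finset.mem_union_right _ h
      · exact h₁ ▸ Finset.mem_union_right _ h
  have hgen : L = S ∪ oddN G S :=
    (hL.2 (S ∪ oddN G S) ⟨S, hSne, rfl⟩ hsub).symm
  refine ⟨?_, hSne, hgen⟩
  apply Finset.Subset.antisymm
  · intro v hv
    by_contra hcon
    rw [Finset.mem_union, not_or] at hcon
    obtain ⟨hv0, hv1⟩ := hcon
    have ho0 : v ∈ oddN G D₀ := by
      have := h₀ ▸ hv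
      rcases Finset.mem_union.mp this with h | h
      · exact absurd h hv0
      · exact h
    have ho1 : v ∈ oddN G D₁ := by
      have := h₁ ▸ hv
      rcases Finset.mem_union.mp this with h | h
      · exact absurd h hv1
      · exact h
    have hv' := hgen ▸ hv
    rcases Finset.mem_union.mp hv' with h | h
    · rcases Finset.mem_symmDiff.mp h with ⟨h', _⟩ | ⟨h', _⟩
      · exact hv0 h'
      · exact hv1 h'
    · rw [hodd] at h
      rcases Finset.mem_symmDiff.mp h with ⟨_, h'⟩ | ⟨_, h'⟩
      · exact h' ho1
      · exact h' ho0
  · intro v hv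
    rcases Finset.mem_union.mp hv with h | h
    · exact h₀ ▸ Finset.mem_union_left _ h
    · exact h₁ ▸ Finset.mem_union_left _ h
end

section
/- A minimal local set of a finite simple graph has exactly one or exactly three generators, and in the latter case the three generators are of the form D_0, D_1, D_0 Δ D_1 and the minimal local set has even cardinality. -/
lemma pigeon4 : ∀ x0 x1 x2 x3 : Bool × Bool, (x0 ≠ (false, false) ∧ x1 ≠ (false, false) ∧
    x2 ≠ (false, false) ∧ x3 ≠ (false, false) ∧ x0 ≠ x1 ∧ x0 ≠ x2 ∧ x1 ≠ x2) →
    x3 = x0 ∨ x3 = x1 ∨ x3 = x2 := by decide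

lemma cover3 : ∀ x0 x1 x2 : Bool × Bool, (x0 ≠ (false, false) ∧ x1 ≠ (false, false) ∧
    x2 ≠ (false, false) ∧ x0 ≠ x1 ∧ x0 ≠ x2 ∧ x1 ≠ x2) →
    x0 = (true, true) ∨ x1 = (true, true) ∨ x2 = (true, true) := by decide

open scoped Classical

section aux
variable {V : Type*} [Fintype V] (G : SimpleGraph V)

lemma mem_oddN {D : Finset V} {v : V} :
    v ∈ oddN G D ↔ Odd ((D.filter fun d => G.Adj v d).card) := by
  simp [oddN]

lemma filter_symmDiff' (p : V → Prop) [DecidablePred p] (s t : Finset V) :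
    (symmDiff s t).filter p = symmDiff (s.filter p) (t.filter p) := by
  ext v
  simp only [Finset.mem_filter, Finset.mem_symmDiff]
  tauto

lemma oddN_symmDiff_s9 (D D' : Finset V) :
    oddN G (symmDiff D D') = symmDiff (oddN G D) (oddN G D') := by
  ext v
  simp only [mem_oddN, Finset.mem_symmDiff, mem_oddN]
  rw [filter_symmDiff']
  set s := D.filter fun d => G.Adj v d
  set t := D'.filter fun d => G.Adj v d
  have h1 : (symmDiff s t).card = (s \ t).card + (t \ s).card := by
    rw [symmDiff_def]
    exact Finset.card_union_of_disjoint (disjoint_sdiff_sdiff)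
  have h2 : (s \ t).card + (s ∩ t).card = s.card := Finset.card_sdiff_add_card_inter s t
  have h3 : (t \ s).card + (t ∩ s).card = t.card := Finset.card_sdiff_add_card_inter t s
  have h4 : (s ∩ t).card = (t ∩ s).card := by rw [Finset.inter_comm]
  simp only [Nat.odd_iff] at *
  omega
end aux

section hand
variable {V : Type*} [Fintype V] (G : SimpleGraph V)

lemma natCast_zmod2 (n : ℕ) : (n : ZMod 2) = if Odd n then 1 else 0 := by
  rw [← ZMod.natCast_mod]
  rcases Nat.even_or_odd n with h | h
  · rw [Nat.even_iff] at h; simp [h, Nat.odd_iff]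
  · have h' := h
    rw [Nat.odd_iff] at h'
    simp [h', h]

lemma handshake (D : Finset V) : Even ((D ∩ oddN G D).card) := by
  have hcast : ((D ∩ oddN G D).card : ZMod 2) = 0 := by
    have hfil : D ∩ oddN G D = D.filter fun v => v ∈ oddN G D := by
      ext v; simp [Finset.mem_filter, Finset.mem_inter, and_comm]
    have h1 : ((D ∩ oddN G D).card : ZMod 2)
        = ∑ v ∈ D, ((D.filter fun d => G.Adj v d).card : ZMod 2) := by
      rw [hfil, Finset.card_filter]
      push_cast
      refine Finset.sum_congr rfl fun v _ => ?_
      rw [natCast_zmod2]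
      by_cases hv : v ∈ oddN G D
      · simp [hv, (mem_oddN G).1 hv]
      · have : ¬ Odd ((D.filter fun d => G.Adj v d).card) := fun h => hv ((mem_oddN G).2 h)
        simp [hv, this]
    have h2 : ∑ v ∈ D, ((D.filter fun d => G.Adj v d).card : ZMod 2)
        = ∑ p ∈ D ×ˢ D, (if G.Adj p.1 p.2 then (1 : ZMod 2) else 0) := by
      rw [Finset.sum_product]
      refine Finset.sum_congr rfl fun v _ => ?_
      rw [Finset.card_filter]
      push_cast
      rfl
    rw [h1, h2]
    refine Finset.sum_involution (fun p _ => (p.2, p.1)) ?_ ?_ ?_ ?_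
    · intro p _
      by_cases h : G.Adj p.1 p.2
      · simp only [h, h.symm, if_true]
        decide
      · have h' : ¬ G.Adj p.2 p.1 := fun hh => h hh.symm
        simp [h, h']
    · intro p _ hne
      by_cases h : G.Adj p.1 p.2
      · intro heq
        have h2 : p.2 = p.1 := congrArg Prod.fst heq
        exact G.ne_of_adj h h2.symm
      · simp [h] at hne
    · intro p hp
      rw [Finset.mem_product] at hp ⊢
      exact ⟨hp.2, hp.1⟩
    · intro p _; rfl
  exact even_iff_two_dvd.mpr ((ZMod.natCast_eq_zero_iff _ _).1 hcast)
end hand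

section gen
variable {V : Type*} [Fintype V] {G : SimpleGraph V} {L : Finset V}

lemma gen_mem_or {D : Finset V} (hD : D.Nonempty ∧ L = D ∪ oddN G D) {v : V}
    (hv : v ∈ L) : v ∈ D ∨ v ∈ oddN G D := by
  rw [hD.2] at hv
  exact Finset.mem_union.1 hv

lemma gen_symmDiff (hL : IsMinimalLocalSet G L) {D D' : Finset V}
    (hD : D.Nonempty ∧ L = D ∪ oddN G D) (hD' : D'.Nonempty ∧ L = D' ∪ oddN G D')
    (hne : D ≠ D') :
    (symmDiff D D').Nonempty ∧ L = symmDiff D D' ∪ oddN G (symmDiff D D') := by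
  have hne' : (symmDiff D D').Nonempty := by
    rw [Finset.nonempty_iff_ne_empty]
    intro h
    exact hne (symmDiff_eq_bot.1 h)
  refine ⟨hne', ?_⟩
  have hsub : symmDiff D D' ∪ oddN G (symmDiff D D') ⊆ L := by
    rw [oddN_symmDiff_s9]
    intro v hv
    rcases Finset.mem_union.1 hv with h | h
    · rcases Finset.mem_symmDiff.1 h with ⟨h1, _⟩ | ⟨h1, _⟩
      · rw [hD.2]; exact Finset.mem_union_left _ h1
      · rw [hD'.2]; exact Finset.mem_union_left _ h1
    · rcases Finset.mem_symmDiff.1 h with ⟨h1, _⟩ | ⟨h1, _⟩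
      · rw [hD.2]; exact Finset.mem_union_right _ h1
      · rw [hD'.2]; exact Finset.mem_union_right _ h1
  exact (hL.2 _ ⟨_, hne', rfl⟩ hsub).symm

lemma gen_inj (hL : IsMinimalLocalSet G L) {D D' : Finset V}
    (hD : D.Nonempty ∧ L = D ∪ oddN G D) (hD' : D'.Nonempty ∧ L = D' ∪ oddN G D')
    {v : V} (hv : v ∈ L) (h1 : v ∈ D ↔ v ∈ D') (h2 : v ∈ oddN G D ↔ v ∈ oddN G D') :
    D = D' := by
  by_contra hne
  have hS := gen_symmDiff hL hD hD' hne
  rcases gen_mem_or hS hv with h | h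
  · rcases Finset.mem_symmDiff.1 h with ⟨ha, hb⟩ | ⟨ha, hb⟩
    · exact hb (h1.1 ha)
    · exact hb (h1.2 ha)
  · rw [oddN_symmDiff_s9] at h
    rcases Finset.mem_symmDiff.1 h with ⟨ha, hb⟩ | ⟨ha, hb⟩
    · exact hb (h2.1 ha)
    · exact hb (h2.2 ha)
end gen

noncomputable def pat {V : Type*} [Fintype V] (G : SimpleGraph V) (v : V) (E : Finset V) :
    Bool × Bool :=
  (decide (v ∈ E), decide (v ∈ oddN G E))

section pat
variable {V : Type*} [Fintype V] {G : SimpleGraph V} {L : Finset V}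

lemma pat_ne_ff {E : Finset V} (hE : E.Nonempty ∧ L = E ∪ oddN G E) {v : V} (hv : v ∈ L) :
    pat G v E ≠ (false, false) := by
  intro h
  have h1 : decide (v ∈ E) = false := congrArg Prod.fst h
  have h2 : decide (v ∈ oddN G E) = false := congrArg Prod.snd h
  rcases gen_mem_or hE hv with hh | hh
  · exact of_decide_eq_false h1 hh
  · exact of_decide_eq_false h2 hh

lemma pat_ne (hL : IsMinimalLocalSet G L) {D D' : Finset V}
    (hD : D.Nonempty ∧ L = D ∪ oddN G D) (hD' : D'.Nonempty ∧ L = D' ∪ oddN G D')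
    (hne : D ≠ D') {v : V} (hv : v ∈ L) : pat G v D ≠ pat G v D' := by
  intro h
  apply hne
  refine gen_inj hL hD hD' hv ?_ ?_
  · exact decide_eq_decide.1 (congrArg Prod.fst h)
  · exact decide_eq_decide.1 (congrArg Prod.snd h)

lemma pat_eq_tt {E : Finset V} {v : V} (h : pat G v E = (true, true)) :
    v ∈ E ∧ v ∈ oddN G E :=
  ⟨of_decide_eq_true (congrArg Prod.fst h), of_decide_eq_true (congrArg Prod.snd h)⟩

lemma pat_eq_tt' {E : Finset V} {v : V} (h1 : v ∈ E) (h2 : v ∈ oddN G E) :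
    pat G v E = (true, true) := by
  simp [pat, h1, h2]
end pat
/-- A minimal local set has exactly one or exactly three generators; in the latter
case the generators are `D₀`, `D₁`, `D₀ Δ D₁` and the minimal local set has even
cardinality. -/
theorem stmt_9 {V : Type*} [Fintype V] (G : SimpleGraph V) (L : Finset V)
    (hL : IsMinimalLocalSet G L) :
    (∃ D : Finset V,
        {D' : Finset V | D'.Nonempty ∧ L = D' ∪ oddN G D'} = {D}) ∨
    (∃ D₀ D₁ : Finset V, D₀ ≠ D₁ ∧
        {D' : Finset V | D'.Nonempty ∧ L = D' ∪ oddN G D'} = {D₀, D₁, symmDiff D₀ D₁} ∧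
        Even L.card) := by
  obtain ⟨⟨Dw, hw⟩, hmin⟩ := hL
  have hL' : IsMinimalLocalSet G L := ⟨⟨Dw, hw⟩, hmin⟩
  by_cases hone : ∀ D : Finset V, (D.Nonempty ∧ L = D ∪ oddN G D) → D = Dw
  · left
    refine ⟨Dw, Set.ext fun D => ⟨fun h => hone D h, fun h => ?_⟩⟩
    rw [Set.mem_singleton_iff] at h
    exact h ▸ hw
  · right
    push_neg at hone
    obtain ⟨D₁, hD₁, hne10⟩ := hone
    have hD₀ : Dw.Nonempty ∧ L = Dw ∪ oddN G Dw := hw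
    set D₀ := Dw with hD₀def
    have hne : D₀ ≠ D₁ := fun h => hne10 h.symm
    have hD₂ : (symmDiff D₀ D₁).Nonempty ∧ L = symmDiff D₀ D₁ ∪ oddN G (symmDiff D₀ D₁) :=
      gen_symmDiff hL' hD₀ hD₁ hne
    set D₂ := symmDiff D₀ D₁ with hD₂def
    have hne02 : D₀ ≠ D₂ := by
      intro h
      have : D₁ = ⊥ := symmDiff_eq_left.1 h.symm
      exact hD₁.1.ne_empty this
    have hne12 : D₁ ≠ D₂ := by
      intro h
      have : D₀ = ⊥ := symmDiff_eq_right.1 h.symm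
      exact hD₀.1.ne_empty this
    obtain ⟨v₀, hv₀D⟩ := hD₀.1
    have hv₀ : v₀ ∈ L := by rw [hD₀.2]; exact Finset.mem_union_left _ hv₀D
    refine ⟨D₀, D₁, hne, ?_, ?_⟩
    · apply Set.ext
      intro D
      simp only [Set.mem_setOf_eq, Set.mem_insert_iff, Set.mem_singleton_iff]
      constructor
      · intro hD
        have hp := pigeon4 (pat G v₀ D₀) (pat G v₀ D₁) (pat G v₀ D₂) (pat G v₀ D)
          ⟨pat_ne_ff hD₀ hv₀, pat_ne_ff hD₁ hv₀, pat_ne_ff hD₂ hv₀, pat_ne_ff hD hv₀,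
           pat_ne hL' hD₀ hD₁ hne hv₀, pat_ne hL' hD₀ hD₂ hne02 hv₀,
           pat_ne hL' hD₁ hD₂ hne12 hv₀⟩
        rcases hp with h | h | h
        · left
          by_contra hcon
          exact pat_ne hL' hD hD₀ hcon hv₀ h
        · right; left
          by_contra hcon
          exact pat_ne hL' hD hD₁ hcon hv₀ h
        · right; right
          by_contra hcon
          exact pat_ne hL' hD hD₂ hcon hv₀ h
      · rintro (rfl | rfl | rfl)
        · exact hD₀
        · exact hD₁
        · exact hD₂
    · set T₀ := D₀ ∩ oddN G D₀ with hT₀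
      set T₁ := D₁ ∩ oddN G D₁ with hT₁
      set T₂ := D₂ ∩ oddN G D₂ with hT₂
      have hTD : ∀ E : Finset V, (E.Nonempty ∧ L = E ∪ oddN G E) →
          ∀ v ∈ E ∩ oddN G E, v ∈ L ∧ pat G v E = (true, true) := by
        intro E hE v hv
        rw [Finset.mem_inter] at hv
        exact ⟨by rw [hE.2]; exact Finset.mem_union_left _ hv.1, pat_eq_tt' hv.1 hv.2⟩
      have hcover : L = T₀ ∪ (T₁ ∪ T₂) := by
        apply Finset.Subset.antisymm
        · intro v hv
          have hc := cover3 (pat G v D₀) (pat G v D₁) (pat G v D₂)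
            ⟨pat_ne_ff hD₀ hv, pat_ne_ff hD₁ hv, pat_ne_ff hD₂ hv,
             pat_ne hL' hD₀ hD₁ hne hv, pat_ne hL' hD₀ hD₂ hne02 hv,
             pat_ne hL' hD₁ hD₂ hne12 hv⟩
          simp only [Finset.mem_union, hT₀, hT₁, hT₂, Finset.mem_inter]
          rcases hc with h | h | h
          · exact Or.inl (pat_eq_tt h)
          · exact Or.inr (Or.inl (pat_eq_tt h))
          · exact Or.inr (Or.inr (pat_eq_tt h))
        · intro v hv
          simp only [Finset.mem_union, hT₀, hT₁, hT₂, Finset.mem_inter] at hv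
          rcases hv with ⟨h, _⟩ | ⟨h, _⟩ | ⟨h, _⟩
          · rw [hD₀.2]; exact Finset.mem_union_left _ h
          · rw [hD₁.2]; exact Finset.mem_union_left _ h
          · rw [hD₂.2]; exact Finset.mem_union_left _ h
      have hdis12 : Disjoint T₁ T₂ := by
        rw [Finset.disjoint_left]
        intro v hv1 hv2
        obtain ⟨hvL, hp1⟩ := hTD D₁ hD₁ v hv1
        obtain ⟨_, hp2⟩ := hTD D₂ hD₂ v hv2
        exact pat_ne hL' hD₁ hD₂ hne12 hvL (hp1.trans hp2.symm)
      have hdis0 : Disjoint T₀ (T₁ ∪ T₂) := by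
        rw [Finset.disjoint_left]
        intro v hv0 hv
        obtain ⟨hvL, hp0⟩ := hTD D₀ hD₀ v hv0
        rcases Finset.mem_union.1 hv with h | h
        · obtain ⟨_, hp1⟩ := hTD D₁ hD₁ v h
          exact pat_ne hL' hD₀ hD₁ hne hvL (hp0.trans hp1.symm)
        · obtain ⟨_, hp2⟩ := hTD D₂ hD₂ v h
          exact pat_ne hL' hD₀ hD₂ hne02 hvL (hp0.trans hp2.symm)
      rw [hcover, Finset.card_union_of_disjoint hdis0, Finset.card_union_of_disjoint hdis12]
      exact Even.add (handshake G D₀) (Even.add (handshake G D₁) (handshake G D₂))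
end

section
/- Every minimal local set L of a finite simple graph of order n satisfies |L| ≤ n/2 if n ≡ 0 (mod 4), and |L| ≤ ⌊n/2⌋ + 1 otherwise. -/
open scoped Classical

namespace StmtAux

open Finset

variable {V : Type*} [Fintype V]

lemma zmod2_cases (z : ZMod 2) : z = 0 ∨ z = 1 := by revert z; decide

lemma zmod2_add_self (z : ZMod 2) : z + z = 0 := by revert z; decide

lemma odd_iff_cast (k : ℕ) : Odd k ↔ (k : ZMod 2) = 1 := by
  rw [Nat.odd_iff, ← ZMod.natCast_mod k 2]
  rcases Nat.mod_two_eq_zero_or_one k with h | h <;> simp [h]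

/-- Adjacency matrix over `ZMod 2`. -/
noncomputable def Am (G : SimpleGraph V) : Matrix V V (ZMod 2) := G.adjMatrix (ZMod 2)

lemma mulVec_apply (G : SimpleGraph V) (x : V → ZMod 2) (v : V) :
    (Am G).mulVec x v
      = ((((Finset.univ.filter fun u => x u = 1)).filter fun d => G.Adj v d).card : ZMod 2) := by
  rw [Am, SimpleGraph.adjMatrix_mulVec_apply]
  have h : ∀ u ∈ G.neighborFinset v, x u = if x u = 1 then (1 : ZMod 2) else 0 := by
    intro u _
    rcases zmod2_cases (x u) with h | h <;> simp [h]
  rw [Finset.sum_congr rfl h, Finset.sum_boole]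
  have hset : (G.neighborFinset v).filter (fun u => x u = 1)
      = (Finset.univ.filter fun u => x u = 1).filter (fun d => G.Adj v d) := by
    ext u
    simp only [mem_filter, SimpleGraph.mem_neighborFinset, mem_univ, true_and]
    tauto
  rw [hset]

lemma mem_oddN (G : SimpleGraph V) (D : Finset V) (v : V) :
    v ∈ oddN G D ↔ ((D.filter fun d => G.Adj v d).card : ZMod 2) = 1 := by
  simp [oddN, odd_iff_cast]

/-- The local set generated by the support of `x`. -/
noncomputable def Mset (G : SimpleGraph V) (x : V → ZMod 2) : Finset V :=
  Finset.univ.filter fun v => x v = 1 ∨ (Am G).mulVec x v = 1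

lemma isLocalSet_Mset (G : SimpleGraph V) (x : V → ZMod 2) (hx : x ≠ 0) :
    IsLocalSet G (Mset G x) := by
  refine ⟨Finset.univ.filter fun u => x u = 1, ?_, ?_⟩
  · obtain ⟨v, hv⟩ := Function.ne_iff.mp hx
    have : x v = 1 := (zmod2_cases (x v)).resolve_left hv
    exact ⟨v, by simp [this]⟩
  · ext v
    rw [Finset.mem_union, mem_oddN]
    simp only [Mset, mem_filter, mem_univ, true_and]
    rw [mulVec_apply]

lemma key (G : SimpleGraph V) (L : Finset V) (hL : IsMinimalLocalSet G L)
    (x : V → ZMod 2) (hx : x ≠ 0)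
    (h1 : ∀ v ∉ L, x v = 0) (h2 : ∀ v ∉ L, (Am G).mulVec x v = 0) :
    ∀ v ∈ L, x v = 1 ∨ (Am G).mulVec x v = 1 := by
  have hsub : Mset G x ⊆ L := by
    intro v hv
    by_contra hvL
    simp only [Mset, mem_filter, mem_univ, true_and] at hv
    rcases hv with h | h
    · rw [h1 v hvL] at h; exact absurd h (by decide)
    · rw [h2 v hvL] at h; exact absurd h (by decide)
  have hEq := hL.2 _ (isLocalSet_Mset G x hx) hsub
  intro v hv
  rw [← hEq] at hv
  simpa [Mset] using hv

/-- Extension by zero as a linear map. -/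
noncomputable def extM (L : Finset V) : (↥L → ZMod 2) →ₗ[ZMod 2] (V → ZMod 2) where
  toFun x v := if h : v ∈ L then x ⟨v, h⟩ else 0
  map_add' x y := by funext v; by_cases h : v ∈ L <;> simp [h]
  map_smul' c x := by funext v; by_cases h : v ∈ L <;> simp [h]

lemma extM_mem (L : Finset V) (x : ↥L → ZMod 2) {v : V} (h : v ∈ L) :
    extM L x v = x ⟨v, h⟩ := dif_pos h

lemma extM_notMem (L : Finset V) (x : ↥L → ZMod 2) {v : V} (h : v ∉ L) :
    extM L x v = 0 := dif_neg h

lemma extM_inj (L : Finset V) : Function.Injective (extM L) := by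
  intro x y h
  funext u
  have := congrFun h u.1
  rwa [extM_mem L x u.2, extM_mem L y u.2] at this

/-- The "cut" linear map. -/
noncomputable def Tmap (G : SimpleGraph V) (L : Finset V) :
    (↥L → ZMod 2) →ₗ[ZMod 2] (↥(Lᶜ) → ZMod 2) :=
  (LinearMap.funLeft (ZMod 2) (ZMod 2) (fun v : ↥(Lᶜ) => (v : V))).comp
    ((Am G).mulVecLin.comp (extM L))

lemma mem_ker_Tmap (G : SimpleGraph V) (L : Finset V) (x : ↥L → ZMod 2) :
    x ∈ LinearMap.ker (Tmap G L) ↔ ∀ v ∉ L, (Am G).mulVec (extM L x) v = 0 := by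
  rw [LinearMap.mem_ker]
  constructor
  · intro h v hv
    have := congrFun h ⟨v, Finset.mem_compl.mpr hv⟩
    simpa [Tmap, Matrix.mulVecLin_apply] using this
  · intro h
    funext v
    have := h v.1 (Finset.mem_compl.mp v.2)
    simpa [Tmap, Matrix.mulVecLin_apply] using this

lemma card_bound (G : SimpleGraph V) (L : Finset V) (hL : IsMinimalLocalSet G L) :
    L.card + L.card ≤ Fintype.card V + 2 := by
  rcases L.eq_empty_or_nonempty with rfl | ⟨v₀, hv₀⟩
  · simp
  -- evaluation map at v₀
  set φ : (↥L → ZMod 2) →ₗ[ZMod 2] (ZMod 2 × ZMod 2) :=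
    ((LinearMap.proj v₀).comp (extM L)).prod
      ((LinearMap.proj v₀).comp ((Am G).mulVecLin.comp (extM L))) with hφ
  have hinj : Function.Injective (φ.comp (LinearMap.ker (Tmap G L)).subtype) := by
    rw [← LinearMap.ker_eq_bot]
    rw [Submodule.eq_bot_iff]
    rintro ⟨x, hx⟩ hker
    simp only [LinearMap.mem_ker, LinearMap.comp_apply, Submodule.subtype_apply] at hker
    have hx1 : extM L x v₀ = 0 := congrArg Prod.fst hker
    have hx2 : (Am G).mulVec (extM L x) v₀ = 0 := by
      have := congrArg Prod.snd hker
      simpa [hφ, Matrix.mulVecLin_apply] using this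
    by_contra hne
    have hxne : x ≠ 0 := fun h => hne (by simp [h])
    have hext : extM L x ≠ 0 := fun h => hxne (extM_inj L (by simpa using h))
    have := key G L hL (extM L x) hext (fun v hv => extM_notMem L x hv)
      ((mem_ker_Tmap G L x).mp hx) v₀ hv₀
    rcases this with h | h
    · rw [hx1] at h; exact absurd h (by decide)
    · rw [hx2] at h; exact absurd h (by decide)
  have hk2 : Module.finrank (ZMod 2) (LinearMap.ker (Tmap G L)) ≤ 2 := by
    have := LinearMap.finrank_le_finrank_of_injective hinj
    simpa [Module.finrank_prod] using this
  have hrn := LinearMap.finrank_range_add_finrank_ker (Tmap G L)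
  rw [Module.finrank_pi, Fintype.card_coe] at hrn
  have hrle : Module.finrank (ZMod 2) (LinearMap.range (Tmap G L))
      ≤ Fintype.card V - L.card := by
    have := Submodule.finrank_le (LinearMap.range (Tmap G L))
    rwa [Module.finrank_pi, Fintype.card_coe, Finset.card_compl] at this
  have hcardle : L.card ≤ Fintype.card V := Finset.card_le_univ L
  omega

lemma even_filter (G : SimpleGraph V) (L : Finset V) (x : V → ZMod 2)
    (h1 : ∀ v ∉ L, x v = 0) :
    Even (L.filter fun v => x v = 1 ∧ (Am G).mulVec x v = 1).card := by
  -- quadratic form vanishes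
  have hq : ∑ v, x v * (Am G).mulVec x v = 0 := by
    have h1' : ∑ v, x v * (Am G).mulVec x v
        = ∑ p ∈ Finset.univ ×ˢ Finset.univ, x p.1 * (Am G p.1 p.2 * x p.2) := by
      rw [Finset.sum_product]
      apply Finset.sum_congr rfl
      intro v _
      rw [Matrix.mulVec, dotProduct, Finset.mul_sum]
    rw [h1', ← Finset.diag_union_offDiag Finset.univ,
      Finset.sum_union (Finset.disjoint_diag_offDiag _)]
    have hdiag : ∑ p ∈ Finset.univ.diag, x p.1 * (Am G p.1 p.2 * x p.2) = 0 := by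
      rw [Finset.sum_diag]
      apply Finset.sum_eq_zero
      intro v _
      simp [Am, SimpleGraph.adjMatrix_apply]
    have hoff : ∑ p ∈ Finset.univ.offDiag, x p.1 * (Am G p.1 p.2 * x p.2) = 0 := by
      apply Finset.sum_involution (fun p _ => (p.2, p.1))
      · intro p _
        have hsymm : Am G p.2 p.1 = Am G p.1 p.2 := by
          simp [Am, SimpleGraph.adjMatrix_apply, G.adj_comm]
        simp only [hsymm]
        have : x p.2 * (Am G p.1 p.2 * x p.1) = x p.1 * (Am G p.1 p.2 * x p.2) := by ring
        rw [this, zmod2_add_self]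
      · intro p hp _
        have := (Finset.mem_offDiag.mp hp).2.2
        intro hcontra
        exact this (congrArg Prod.snd hcontra)
      · intro p hp
        have h := Finset.mem_offDiag.mp hp
        exact Finset.mem_offDiag.mpr ⟨Finset.mem_univ _, Finset.mem_univ _, fun h' => h.2.2 h'.symm⟩
      · intro p _; rfl
    rw [hdiag, hoff, add_zero]
  have hLsum : ∑ v ∈ L, x v * (Am G).mulVec x v = 0 := by
    rw [Finset.sum_subset (Finset.subset_univ L)]
    · exact hq
    · intro v _ hv
      rw [h1 v hv, zero_mul]
  have hsum2 : ∑ v ∈ L, x v * (Am G).mulVec x v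
      = ((L.filter fun v => x v = 1 ∧ (Am G).mulVec x v = 1).card : ZMod 2) := by
    rw [← Finset.sum_boole]
    apply Finset.sum_congr rfl
    intro v _
    rcases zmod2_cases (x v) with h | h <;>
      rcases zmod2_cases ((Am G).mulVec x v) with h' | h' <;> simp [h, h']
  rw [hsum2] at hLsum
  rw [Nat.even_iff, ← Nat.dvd_iff_mod_eq_zero]
  exact (ZMod.natCast_eq_zero_iff _ 2).mp hLsum

lemma three_count (p₁ q₁ p₂ q₂ : ZMod 2)
    (h1 : p₁ = 1 ∨ q₁ = 1) (h2 : p₂ = 1 ∨ q₂ = 1) (h3 : p₁ + p₂ = 1 ∨ q₁ + q₂ = 1) :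
    (1 : ℕ) = (if p₁ = 1 ∧ q₁ = 1 then 1 else 0) + (if p₂ = 1 ∧ q₂ = 1 then 1 else 0)
      + (if p₁ + p₂ = 1 ∧ q₁ + q₂ = 1 then 1 else 0) := by
  revert p₁ q₁ p₂ q₂; decide

lemma not_half_plus_one (G : SimpleGraph V) (L : Finset V) (hL : IsMinimalLocalSet G L)
    (hn : Fintype.card V % 4 = 0) (hcard : L.card = Fintype.card V / 2 + 1) : False := by
  set n := Fintype.card V with hndef
  -- finrank K ≥ 2
  have hrn := LinearMap.finrank_range_add_finrank_ker (Tmap G L)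
  rw [Module.finrank_pi, Fintype.card_coe] at hrn
  have hrle : Module.finrank (ZMod 2) (LinearMap.range (Tmap G L)) ≤ n - L.card := by
    have := Submodule.finrank_le (LinearMap.range (Tmap G L))
    rwa [Module.finrank_pi, Fintype.card_coe, Finset.card_compl] at this
  have hcardle : L.card ≤ n := Finset.card_le_univ L
  have hk2 : 2 ≤ Module.finrank (ZMod 2) (LinearMap.ker (Tmap G L)) := by omega
  -- extract two independent kernel elements
  let bas := Module.finBasis (ZMod 2) (LinearMap.ker (Tmap G L))
  let a' : ↥(LinearMap.ker (Tmap G L)) := bas ⟨0, by omega⟩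
  let b' : ↥(LinearMap.ker (Tmap G L)) := bas ⟨1, by omega⟩
  have hab' : a' ≠ b' := by
    intro h
    have := bas.injective h
    simp at this
  have ha'0 : (a' : ↥L → ZMod 2) ≠ 0 := by
    intro h
    exact bas.ne_zero _ (Subtype.ext h)
  have hb'0 : (b' : ↥L → ZMod 2) ≠ 0 := by
    intro h
    exact bas.ne_zero _ (Subtype.ext h)
  set a : V → ZMod 2 := extM L (a' : ↥L → ZMod 2) with hadef
  set b : V → ZMod 2 := extM L (b' : ↥L → ZMod 2) with hbdef
  have ha0 : a ≠ 0 := fun h => ha'0 (extM_inj L (by simpa using h))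
  have hb0 : b ≠ 0 := fun h => hb'0 (extM_inj L (by simpa using h))
  have hc0 : a + b ≠ 0 := by
    intro h
    rw [hadef, hbdef, ← map_add] at h
    have hsum : (a' : ↥L → ZMod 2) + (b' : ↥L → ZMod 2) = 0 := extM_inj L (by simpa using h)
    have : (a' : ↥L → ZMod 2) = (b' : ↥L → ZMod 2) := by
      funext u
      have := congrFun hsum u
      rcases zmod2_cases ((a' : ↥L → ZMod 2) u) with h1 | h1 <;>
        rcases zmod2_cases ((b' : ↥L → ZMod 2) u) with h2 | h2 <;>
          simp [h1, h2] at this ⊢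
    exact hab' (Subtype.ext this)
  -- support and kernel conditions
  have h1a : ∀ v ∉ L, a v = 0 := fun v hv => extM_notMem L _ hv
  have h1b : ∀ v ∉ L, b v = 0 := fun v hv => extM_notMem L _ hv
  have h1c : ∀ v ∉ L, (a + b) v = 0 := by
    intro v hv
    simp [Pi.add_apply, h1a v hv, h1b v hv]
  have h2a : ∀ v ∉ L, (Am G).mulVec a v = 0 := (mem_ker_Tmap G L _).mp a'.2
  have h2b : ∀ v ∉ L, (Am G).mulVec b v = 0 := (mem_ker_Tmap G L _).mp b'.2
  have h2c : ∀ v ∉ L, (Am G).mulVec (a + b) v = 0 := by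
    intro v hv
    rw [Matrix.mulVec_add, Pi.add_apply, h2a v hv, h2b v hv, add_zero]
  -- key facts
  have hka := key G L hL a ha0 h1a h2a
  have hkb := key G L hL b hb0 h1b h2b
  have hkc := key G L hL (a + b) hc0 h1c h2c
  -- the count
  have hcount : L.card
      = (L.filter fun v => a v = 1 ∧ (Am G).mulVec a v = 1).card
      + (L.filter fun v => b v = 1 ∧ (Am G).mulVec b v = 1).card
      + (L.filter fun v => (a + b) v = 1 ∧ (Am G).mulVec (a + b) v = 1).card := by
    rw [Finset.card_filter, Finset.card_filter, Finset.card_filter,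
      ← Finset.sum_add_distrib, ← Finset.sum_add_distrib]
    conv_lhs => rw [Finset.card_eq_sum_ones]
    apply Finset.sum_congr rfl
    intro v hv
    have e1 : (a + b) v = a v + b v := rfl
    have e2 : (Am G).mulVec (a + b) v = (Am G).mulVec a v + (Am G).mulVec b v := by
      rw [Matrix.mulVec_add, Pi.add_apply]
    rw [e1, e2]
    exact three_count _ _ _ _ (hka v hv) (hkb v hv)
      (by rw [← e1, ← e2]; exact hkc v hv)
  have hea := even_filter G L a h1a
  have heb := even_filter G L b h1b
  have hec := even_filter G L (a + b) h1c
  rw [Nat.even_iff] at hea heb hec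
  omega

end StmtAux

/-- Every minimal local set `L` of a graph of order `n` satisfies `|L| ≤ n/2` if
`n ≡ 0 (mod 4)`, and `|L| ≤ ⌊n/2⌋ + 1` otherwise. -/
theorem stmt_10 {V : Type*} [Fintype V] (G : SimpleGraph V) (L : Finset V)
    (hL : IsMinimalLocalSet G L) :
    (Fintype.card V % 4 = 0 → L.card ≤ Fintype.card V / 2) ∧
    (Fintype.card V % 4 ≠ 0 → L.card ≤ Fintype.card V / 2 + 1) := by
  have hb := StmtAux.card_bound G L hL
  constructor
  · intro h4
    by_contra hgt
    have hcard : L.card = Fintype.card V / 2 + 1 := by omega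
    exact StmtAux.not_half_plus_one G L hL h4 hcard
  · intro _
    omega
end

section
/- In the path graph P_n on vertices 1,...,n (edges between i and i+1) with n > 2, for every k from 0 to ⌈n/2⌉ - 2, the set {1,3,5,...,2k+1} ∪ {2k+2} is a minimal local set; hence P_n has minimal local sets of every size from 2 to ⌈n/2⌉. -/
open scoped Classical

/-- The path graph on `Fin n` (vertices `0, ..., n-1`, edges between `i` and `i+1`). -/
def pathG (n : ℕ) : SimpleGraph (Fin n) :=
  SimpleGraph.fromRel fun i j => (i : ℕ) + 1 = (j : ℕ)

lemma pathG_adj {n : ℕ} (v d : Fin n) :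
    (pathG n).Adj v d ↔ ((d : ℕ) = (v : ℕ) + 1 ∨ (d : ℕ) + 1 = (v : ℕ)) := by
  simp only [pathG, SimpleGraph.fromRel_adj]
  constructor
  · rintro ⟨hne, h | h⟩ <;> omega
  · intro h
    refine ⟨fun he => ?_, by omega⟩
    subst he; omega

lemma card_filter_eq {n : ℕ} (D : Finset (Fin n)) (m : ℕ) :
    (D.filter fun d : Fin n => d.val = m).card = if ∃ d ∈ D, d.val = m then 1 else 0 := by
  split_ifs with h
  · obtain ⟨d₀, hd₀, hm⟩ := h
    have : (D.filter fun d : Fin n => d.val = m) = {d₀} := by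
      ext d
      simp only [Finset.mem_filter, Finset.mem_singleton]
      constructor
      · rintro ⟨hd, hv⟩
        exact Fin.val_injective (by omega)
      · rintro rfl; exact ⟨hd₀, hm⟩
    rw [this, Finset.card_singleton]
  · rw [Finset.filter_false_of_mem fun d hd hv => h ⟨d, hd, hv⟩, Finset.card_empty]

lemma card_filter_eq' {n : ℕ} (D : Finset (Fin n)) (m : ℕ) :
    (D.filter fun d : Fin n => d.val + 1 = m).card = if ∃ d ∈ D, d.val + 1 = m then 1 else 0 := by
  split_ifs with h
  · obtain ⟨d₀, hd₀, hm⟩ := h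
    have : (D.filter fun d : Fin n => d.val + 1 = m) = {d₀} := by
      ext d
      simp only [Finset.mem_filter, Finset.mem_singleton]
      constructor
      · rintro ⟨hd, hv⟩
        exact Fin.val_injective (by omega)
      · rintro rfl; exact ⟨hd₀, hm⟩
    rw [this, Finset.card_singleton]
  · rw [Finset.filter_false_of_mem fun d hd hv => h ⟨d, hd, hv⟩, Finset.card_empty]

lemma mem_oddN_path {n : ℕ} (D : Finset (Fin n)) (v : Fin n) :
    v ∈ oddN (pathG n) D ↔
      ((∃ d ∈ D, (d : ℕ) = (v : ℕ) + 1) ↔ ¬ ∃ d ∈ D, (d : ℕ) + 1 = (v : ℕ)) := by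
  have hset : (D.filter fun d => (pathG n).Adj v d)
      = (D.filter fun d : Fin n => d.val = v.val + 1) ∪ (D.filter fun d : Fin n => d.val + 1 = v.val) := by
    ext d
    simp only [Finset.mem_filter, Finset.mem_union, pathG_adj]
    tauto
  have hdisj : Disjoint (D.filter fun d : Fin n => d.val = v.val + 1)
      (D.filter fun d : Fin n => d.val + 1 = v.val) := by
    rw [Finset.disjoint_left]
    intro a ha hb
    simp only [Finset.mem_filter] at ha hb
    omega
  rw [oddN, Finset.mem_filter]
  simp only [Finset.mem_univ, true_and]
  rw [hset, Finset.card_union_of_disjoint hdisj, card_filter_eq, card_filter_eq']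
  split_ifs with h1 h2 h2 <;> simp [h1, h2, Nat.odd_iff]

lemma exists_val_Dk {n k m : ℕ} :
    (∃ d ∈ (Finset.univ.filter fun v : Fin n => (v : ℕ) % 2 = 0 ∧ (v : ℕ) ≤ 2 * k),
      (d : ℕ) = m) ↔ m < n ∧ m % 2 = 0 ∧ m ≤ 2 * k := by
  constructor
  · rintro ⟨d, hd, rfl⟩
    simp only [Finset.mem_filter, Finset.mem_univ, true_and] at hd
    exact ⟨d.isLt, hd⟩
  · rintro ⟨hm, h1, h2⟩
    exact ⟨⟨m, hm⟩, by simp [h1, h2], rfl⟩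

lemma exists_val_Dk' {n k m : ℕ} :
    (∃ d ∈ (Finset.univ.filter fun v : Fin n => (v : ℕ) % 2 = 0 ∧ (v : ℕ) ≤ 2 * k),
      (d : ℕ) + 1 = m) ↔ 1 ≤ m ∧ m - 1 < n ∧ (m - 1) % 2 = 0 ∧ m - 1 ≤ 2 * k := by
  constructor
  · rintro ⟨d, hd, he⟩
    simp only [Finset.mem_filter, Finset.mem_univ, true_and] at hd
    have := d.isLt
    omega
  · rintro ⟨h0, hm, h1, h2⟩
    exact ⟨⟨m - 1, hm⟩, by simp [h1, h2], by show m - 1 + 1 = m; omega⟩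

lemma oddN_Dk {n k : ℕ} (h : 2 * k + 3 ≤ n) :
    oddN (pathG n) (Finset.univ.filter fun v : Fin n => (v : ℕ) % 2 = 0 ∧ (v : ℕ) ≤ 2 * k)
      = Finset.univ.filter fun v : Fin n => (v : ℕ) = 2 * k + 1 := by
  ext v
  rw [mem_oddN_path, exists_val_Dk, exists_val_Dk']
  simp only [Finset.mem_filter, Finset.mem_univ, true_and]
  have hv : (v : ℕ) < n := v.isLt
  omega

lemma min_local {n k : ℕ} (h : 2 * k + 3 ≤ n) :
    IsMinimalLocalSet (pathG n)
      ((Finset.univ.filter fun v : Fin n => (v : ℕ) % 2 = 0 ∧ (v : ℕ) ≤ 2 * k) ∪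
        Finset.univ.filter fun v : Fin n => (v : ℕ) = 2 * k + 1) := by
  constructor
  · refine ⟨Finset.univ.filter fun v : Fin n => (v : ℕ) % 2 = 0 ∧ (v : ℕ) ≤ 2 * k,
      ⟨⟨0, by omega⟩, ?_⟩, ?_⟩
    · simp
    · rw [oddN_Dk h]
      ext v
      simp [Finset.mem_union]
  · rintro L' ⟨D', hne, rfl⟩ hsub
    have hL1 : ∀ v : Fin n, v ∈ D' →
        ((v : ℕ) % 2 = 0 ∧ (v : ℕ) ≤ 2 * k) ∨ (v : ℕ) = 2 * k + 1 := by
      intro v hv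
      have : v ∈ (Finset.univ.filter fun v : Fin n => (v : ℕ) % 2 = 0 ∧ (v : ℕ) ≤ 2 * k) ∪
          Finset.univ.filter fun v : Fin n => (v : ℕ) = 2 * k + 1 := by
        refine hsub ?_
        simp only [Finset.mem_union]
        exact Or.inl hv
      simpa using this
    have hL2 : ∀ v : Fin n, v ∈ oddN (pathG n) D' →
        ((v : ℕ) % 2 = 0 ∧ (v : ℕ) ≤ 2 * k) ∨ (v : ℕ) = 2 * k + 1 := by
      intro v hv
      have : v ∈ (Finset.univ.filter fun v : Fin n => (v : ℕ) % 2 = 0 ∧ (v : ℕ) ≤ 2 * k) ∪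
          Finset.univ.filter fun v : Fin n => (v : ℕ) = 2 * k + 1 := by
        refine hsub ?_
        simp only [Finset.mem_union]
        exact Or.inr hv
      simpa using this
    -- no element of value 2k+1 in D'
    have hno : ∀ d ∈ D', (d : ℕ) % 2 = 0 ∧ (d : ℕ) ≤ 2 * k := by
      intro d hd
      rcases hL1 d hd with h' | h'
      · exact h'
      · exfalso
        have hw : (⟨2 * k + 2, by omega⟩ : Fin n) ∈ oddN (pathG n) D' := by
          rw [mem_oddN_path]
          have hA : ¬ ∃ d' ∈ D', (d' : ℕ) = ((⟨2 * k + 2, by omega⟩ : Fin n) : ℕ) + 1 := by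
            rintro ⟨d', hd', he⟩
            have he' : (d' : ℕ) = 2 * k + 3 := he
            rcases hL1 d' hd' with h'' | h'' <;> omega
          have hB : ∃ d' ∈ D', (d' : ℕ) + 1 = ((⟨2 * k + 2, by omega⟩ : Fin n) : ℕ) :=
            ⟨d, hd, by show (d : ℕ) + 1 = 2 * k + 2; omega⟩
          exact ⟨fun ha => (hA ha).elim, fun hnb => (hnb hB).elim⟩
        have := hL2 _ hw
        have hval : ((⟨2 * k + 2, by omega⟩ : Fin n) : ℕ) = 2 * k + 2 := rfl
        omega
    -- 0 is in D'
    have h0 : ∃ d ∈ D', (d : ℕ) = 0 := by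
      by_contra h0
      push_neg at h0
      obtain ⟨m, hmD, hmin⟩ := D'.exists_min_image Fin.val hne
      have hm := hno m hmD
      have hm0 : (m : ℕ) ≠ 0 := h0 m hmD
      have hw : (⟨(m : ℕ) - 1, by omega⟩ : Fin n) ∈ oddN (pathG n) D' := by
        rw [mem_oddN_path]
        have hA : ∃ d ∈ D', (d : ℕ) = ((⟨(m : ℕ) - 1, by omega⟩ : Fin n) : ℕ) + 1 :=
          ⟨m, hmD, by show (m : ℕ) = (m : ℕ) - 1 + 1; omega⟩
        have hB : ¬ ∃ d ∈ D', (d : ℕ) + 1 = ((⟨(m : ℕ) - 1, by omega⟩ : Fin n) : ℕ) := by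
          rintro ⟨d, hd, he⟩
          have := hmin d hd
          have he' : (d : ℕ) + 1 = (m : ℕ) - 1 := he
          omega
        exact ⟨fun _ => hB, fun _ => hA⟩
      have := hL2 _ hw
      have hval : ((⟨(m : ℕ) - 1, by omega⟩ : Fin n) : ℕ) = (m : ℕ) - 1 := rfl
      omega
    -- all even values up to 2k are in D'
    have hall : ∀ j, j ≤ k → ∃ d ∈ D', (d : ℕ) = 2 * j := by
      intro j
      induction j with
      | zero => intro _; simpa using h0
      | succ j ih =>
        intro hjk
        obtain ⟨d, hd, hdv⟩ := ih (by omega)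
        by_contra hnone
        push_neg at hnone
        have hw : (⟨2 * j + 1, by omega⟩ : Fin n) ∈ oddN (pathG n) D' := by
          rw [mem_oddN_path]
          have hA : ¬ ∃ d' ∈ D', (d' : ℕ) = ((⟨2 * j + 1, by omega⟩ : Fin n) : ℕ) + 1 := by
            rintro ⟨d', hd', he⟩
            have he' : (d' : ℕ) = 2 * j + 2 := he
            exact hnone d' hd' (by omega)
          have hB : ∃ d' ∈ D', (d' : ℕ) + 1 = ((⟨2 * j + 1, by omega⟩ : Fin n) : ℕ) :=
            ⟨d, hd, by show (d : ℕ) + 1 = 2 * j + 1; omega⟩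
          exact ⟨fun ha => (hA ha).elim, fun hnb => (hnb hB).elim⟩
        have := hL2 _ hw
        have hval : ((⟨2 * j + 1, by omega⟩ : Fin n) : ℕ) = 2 * j + 1 := rfl
        omega
    have hDD : D' = Finset.univ.filter fun v : Fin n => (v : ℕ) % 2 = 0 ∧ (v : ℕ) ≤ 2 * k := by
      ext d
      simp only [Finset.mem_filter, Finset.mem_univ, true_and]
      constructor
      · intro hd; exact hno d hd
      · rintro ⟨he, hle⟩
        obtain ⟨d', hd', hv⟩ := hall ((d : ℕ) / 2) (by omega)
        have : d' = d := Fin.val_injective (by omega)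
        rwa [← this]
    rw [hDD, oddN_Dk h]
    ext v
    simp [Finset.mem_union]

lemma card_L {n k : ℕ} (h : 2 * k + 3 ≤ n) :
    ((Finset.univ.filter fun v : Fin n => (v : ℕ) % 2 = 0 ∧ (v : ℕ) ≤ 2 * k) ∪
      Finset.univ.filter fun v : Fin n => (v : ℕ) = 2 * k + 1).card = k + 2 := by
  have hdisj : Disjoint (Finset.univ.filter fun v : Fin n => (v : ℕ) % 2 = 0 ∧ (v : ℕ) ≤ 2 * k)
      (Finset.univ.filter fun v : Fin n => (v : ℕ) = 2 * k + 1) := by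
    rw [Finset.disjoint_left]
    intro a ha hb
    simp only [Finset.mem_filter, Finset.mem_univ, true_and] at ha hb
    omega
  rw [Finset.card_union_of_disjoint hdisj]
  have h1 : (Finset.univ.filter fun v : Fin n => (v : ℕ) % 2 = 0 ∧ (v : ℕ) ≤ 2 * k)
      = Finset.univ.image (fun j : Fin (k + 1) => (⟨2 * (j : ℕ), by have := j.isLt; omega⟩ : Fin n)) := by
    ext v
    simp only [Finset.mem_filter, Finset.mem_univ, true_and, Finset.mem_image]
    constructor
    · rintro ⟨he, hle⟩
      refine ⟨⟨(v : ℕ) / 2, by omega⟩, Fin.val_injective ?_⟩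
      show 2 * ((v : ℕ) / 2) = (v : ℕ)
      omega
    · rintro ⟨j, rfl⟩
      have := j.isLt
      constructor
      · show 2 * (j : ℕ) % 2 = 0; omega
      · show 2 * (j : ℕ) ≤ 2 * k; omega
  have h2 : (Finset.univ.filter fun v : Fin n => (v : ℕ) = 2 * k + 1)
      = {(⟨2 * k + 1, by omega⟩ : Fin n)} := by
    ext v
    simp [Fin.ext_iff]
  rw [h1, h2, Finset.card_singleton,
    Finset.card_image_of_injective _ (fun a b hab => Fin.val_injective (by
      have : 2 * (a : ℕ) = 2 * (b : ℕ) := congrArg Fin.val hab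
      omega)),
    Finset.card_univ, Fintype.card_fin]

/-- In the path graph `P_n` (`n > 2`), for every `k` from `0` to `⌈n/2⌉ - 2`,
the set `{0, 2, ..., 2k} ∪ {2k+1}` (in 0-indexed form, corresponding to
`{1,3,...,2k+1} ∪ {2k+2}` in 1-indexed form) is a minimal local set; hence `P_n`
has minimal local sets of every size from `2` to `⌈n/2⌉`. -/
theorem stmt_11 (n : ℕ) (hn : 2 < n) :
    (∀ k : ℕ, k + 2 ≤ (n + 1) / 2 →
      IsMinimalLocalSet (pathG n)
        ((Finset.univ.filter fun v : Fin n => (v : ℕ) % 2 = 0 ∧ (v : ℕ) ≤ 2 * k) ∪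
          Finset.univ.filter fun v : Fin n => (v : ℕ) = 2 * k + 1)) ∧
    (∀ s : ℕ, 2 ≤ s → s ≤ (n + 1) / 2 →
      ∃ L : Finset (Fin n), IsMinimalLocalSet (pathG n) L ∧ L.card = s) := by
  constructor
  · intro k hk
    exact min_local (by omega)
  · intro s hs2 hsn
    refine ⟨_, min_local (n := n) (k := s - 2) (by omega), ?_⟩
    rw [card_L (by omega)]
    omega
end

section
/- In the complete graph K_n with n ≥ 2, the minimal local sets are exactly the two-element subsets of vertices. -/
open scoped Classical

open Finset

variable {V : Type*} [Fintype V]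

theorem mem_oddN_top_of_notMem {v : V} {D : Finset V} (hv : v ∉ D) :
    v ∈ oddN ⊤ D ↔ Odd #D := by
  simp only [oddN, SimpleGraph.top_adj, mem_filter, mem_univ, true_and]
  rw [filter_true_of_mem fun d hd => (ne_of_mem_of_not_mem hd hv).symm]

theorem oddN_top_subset_of_even {D : Finset V} (hD : Even #D) : oddN ⊤ D ⊆ D := by
  intro v hv
  by_contra hvD
  exact Nat.not_odd_iff_even.mpr hD ((mem_oddN_top_of_notMem hvD).mp hv)

theorem isLocalSet_top_pair {a b : V} (hab : a ≠ b) : IsLocalSet ⊤ {a, b} := by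
  have hodd : oddN ⊤ {a, b} ⊆ {a, b} := oddN_top_subset_of_even (by simp [card_pair hab])
  exact ⟨{a, b}, insert_nonempty a {b}, (union_eq_left.mpr hodd).symm⟩

theorem two_le_card_of_isLocalSet_top [Nontrivial V] {L : Finset V}
    (hL : IsLocalSet ⊤ L) : 2 ≤ #L := by
  obtain ⟨D, hD, rfl⟩ := hL
  obtain hD2 | ⟨d, rfl⟩ := hD.exists_eq_singleton_or_nontrivial.symm
  · exact (one_lt_card_iff_nontrivial.mpr hD2).trans_le (card_le_card subset_union_left)
  obtain ⟨v, hvd⟩ := exists_ne d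
  have hv : v ∈ oddN ⊤ {d} := (mem_oddN_top_of_notMem (by simpa using hvd)).mpr (by simp)
  exact one_lt_card.mpr ⟨d, by simp, v, mem_union_right _ hv, hvd.symm⟩

theorem isMinimalLocalSet_top_iff [Nontrivial V] {L : Finset V} :
    IsMinimalLocalSet ⊤ L ↔ #L = 2 := by
  constructor
  · rintro ⟨hL, hmin⟩
    obtain ⟨a, ha, b, hb, hab⟩ := one_lt_card.mp (two_le_card_of_isLocalSet_top hL)
    have hpair : {a, b} ⊆ L := insert_subset ha (singleton_subset_iff.mpr hb)
    rw [← hmin _ (isLocalSet_top_pair hab) hpair, card_pair hab]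
  · intro hcard
    obtain ⟨a, b, hab, rfl⟩ := card_eq_two.mp hcard
    refine ⟨isLocalSet_top_pair hab, fun L' hL' hsub => ?_⟩
    exact eq_of_subset_of_card_le hsub (card_pair hab ▸ two_le_card_of_isLocalSet_top hL')

/-- In the complete graph `K_n` with `n ≥ 2`, the minimal local sets are exactly
the two-element subsets of vertices. -/
theorem stmt_12 (n : ℕ) (hn : 2 ≤ n) (L : Finset (Fin n)) :
    IsMinimalLocalSet (⊤ : SimpleGraph (Fin n)) L ↔ L.card = 2 := by
  have : Nontrivial (Fin n) := Fin.nontrivial_iff_two_le.mpr hn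
  exact isMinimalLocalSet_top_iff
end

section
/- In the graph obtained from the complete bipartite graph K_{k,k} by deleting a perfect matching (vertex u_i on the left adjacent to v_j on the right iff i ≠ j), every subset ω of the left side of odd cardinality generates a minimal local set, namely {u_i : i ∈ ω} ∪ {v_j : j ∉ ω}; hence this graph has at least 2^{k-1} minimal local sets. -/
open scoped Classical

/-- The graph `K_{k,k} Δ M_k`: left vertices `Sum.inl i`, right vertices `Sum.inr j`,
with `u_i` adjacent to `v_j` iff `i ≠ j`, and no edges within a side. -/
def kkmk (k : ℕ) : SimpleGraph (Fin k ⊕ Fin k) where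
  Adj a b :=
    match a, b with
    | Sum.inl i, Sum.inr j => i ≠ j
    | Sum.inr i, Sum.inl j => j ≠ i
    | _, _ => False
  symm := by
    constructor
    intro a b h
    rcases a with i | i <;> rcases b with j | j <;> exact h
  loopless := by
    constructor
    intro a h
    rcases a with i | i <;> exact h

/-!
If `D` has left part `A` and right part `B`, then `u_i ∈ Odd(D)` iff `|B \ {i}|` is odd and
`v_j ∈ Odd(D)` iff `|A \ {j}|` is odd. So for `|ω|` odd, `Odd(ω_L) = (ωᶜ)_R`, and
`L = ω_L ∪ (ωᶜ)_R` is local. Let `D ∪ Odd(D) ⊆ L` with `A ≠ ∅`. Then `A ⊆ ω`, and `|A|` is odd: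
otherwise every `v_j` with `j ∈ A` lies in `Odd(D)`, forcing `j ∉ ω`. Now `v_j ∈ Odd(D)` for each
`j ∉ A`, so `ω ⊆ A`; hence `A = ω` and `D ∪ Odd(D) ⊇ L`. The case `B ≠ ∅` is the same after
exchanging the two sides, an automorphism of the graph. Distinct `ω` give distinct sets, and a
nonempty `k`-set has `2^(k-1)` odd subsets since `∑ (-1)^|s| = 0`.
-/

open Finset

theorem Finset.odd_card_erase_iff {α : Type*} [DecidableEq α] (s : Finset α) (a : α) :
    Odd #(s.erase a) ↔ (a ∈ s ↔ Even #s) := by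
  by_cases ha : a ∈ s
  · rw [card_erase_of_mem ha, Nat.odd_sub (card_pos.mpr ⟨a, ha⟩)]
    simp [ha, Nat.not_odd_iff_even]
  · simp [ha, Nat.not_even_iff_odd]

theorem Finset.card_filter_odd_card (α : Type*) [Fintype α] [Nonempty α] :
    #{s : Finset α | Odd #s} = 2 ^ (Fintype.card α - 1) := by
  have hsigned : ∑ s : Finset α, (-1 : ℤ) ^ #s = 0 := by
    rw [← powerset_univ, sum_powerset_neg_one_pow_card, if_neg univ_nonempty.ne_empty]
  have hbalance : #{s : Finset α | Odd #s} = #{s : Finset α | ¬Odd #s} := by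
    rw [← sum_filter_add_sum_filter_not univ (fun s : Finset α => Odd #s),
      sum_congr rfl fun s hs => (mem_filter.mp hs).2.neg_one_pow,
      sum_congr rfl fun s hs => (Nat.not_odd_iff_even.mp (mem_filter.mp hs).2).neg_one_pow,
      sum_const, sum_const] at hsigned
    simp only [nsmul_eq_mul, mul_neg, mul_one] at hsigned
    omega
  have htotal := card_filter_add_card_filter_not (s := (univ : Finset (Finset α)))
    fun s => Odd #s
  obtain ⟨n, hn⟩ := Nat.exists_eq_add_one.mpr (Fintype.card_pos (α := α))
  rw [card_univ, Fintype.card_finset, hn, pow_succ] at htotal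
  rw [hn, Nat.add_sub_cancel]
  omega

theorem image_inl_union_image_inr {α β : Type*} [DecidableEq (α ⊕ β)] (s : Finset α)
    (t : Finset β) : s.image Sum.inl ∪ t.image Sum.inr = s.disjSum t := by
  ext (a | b) <;> simp

theorem oddN_image_iso {V W : Type*} [Fintype V] [Fintype W] [DecidableEq W] {G : SimpleGraph V}
    {H : SimpleGraph W} (f : G ≃g H) (D : Finset V) :
    oddN H (D.image f) = (oddN G D).image f := by
  ext w
  obtain ⟨v, rfl⟩ := f.surjective w
  have : (D.image f).filter (H.Adj (f v)) = (D.filter (G.Adj v)).image f := by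
    ext w
    obtain ⟨u, rfl⟩ := f.surjective w
    simp [f.injective.mem_finset_image, f.map_adj_iff]
  simp [oddN, f.injective.mem_finset_image, this, card_image_of_injective _ f.injective]

section kkmk

variable {k : ℕ}

theorem mem_oddN_kkmk_inl (D : Finset (Fin k ⊕ Fin k)) (i : Fin k) :
    Sum.inl i ∈ oddN (kkmk k) D ↔ Odd #(D.toRight.erase i) := by
  have : D.filter (fun d => (kkmk k).Adj (Sum.inl i) d) = (D.toRight.erase i).map .inr := by
    ext (j | j) <;> simp [kkmk, and_comm, eq_comm]
  simp only [oddN, mem_filter, mem_univ, true_and, this, card_map]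

theorem mem_oddN_kkmk_inr (D : Finset (Fin k ⊕ Fin k)) (j : Fin k) :
    Sum.inr j ∈ oddN (kkmk k) D ↔ Odd #(D.toLeft.erase j) := by
  have : D.filter (fun d => (kkmk k).Adj (Sum.inr j) d) = (D.toLeft.erase j).map .inl := by
    ext (i | i) <;> simp [kkmk, and_comm, eq_comm]
  simp only [oddN, mem_filter, mem_univ, true_and, this, card_map]

def kkmkSwap (k : ℕ) : kkmk k ≃g kkmk k where
  toEquiv := Equiv.sumComm _ _
  map_rel_iff' := by rintro (i | i) (j | j) <;> simp [kkmk, ne_comm]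

theorem oddN_kkmk_image_inl {ω : Finset (Fin k)} (hω : Odd #ω) :
    oddN (kkmk k) (ω.image Sum.inl) = ωᶜ.image Sum.inr := by
  have : ω.image Sum.inl = ω.disjSum (∅ : Finset (Fin k)) := by ext (i | i) <;> simp
  rw [this]
  ext (i | j)
  · simp only [mem_oddN_kkmk_inl, toRight_disjSum]
    simp
  · simp only [mem_oddN_kkmk_inr, toLeft_disjSum, odd_card_erase_iff]
    simp [Nat.not_even_iff_odd.mpr hω]

variable [DecidableEq (Fin k ⊕ Fin k)] {ω : Finset (Fin k)} {D : Finset (Fin k ⊕ Fin k)}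

theorem toLeft_eq_of_subset_disjSum_compl (hsub : D ∪ oddN (kkmk k) D ⊆ ω.disjSum ωᶜ)
    (hD : D.toLeft.Nonempty) : D.toLeft = ω ∧ Odd #D.toLeft := by
  have hleft : D.toLeft ⊆ ω := by
    simpa using toLeft_subset_toLeft (subset_union_left.trans hsub)
  have hodd : ∀ j, Odd #(D.toLeft.erase j) → j ∉ ω := fun j hj => by
    simpa using hsub (mem_union_right _ ((mem_oddN_kkmk_inr D j).mpr hj))
  have hcard : Odd #D.toLeft := by
    obtain ⟨j, hj⟩ := hD
    by_contra heven
    exact hodd j ((odd_card_erase_iff _ _).mpr (iff_of_true hj (Nat.not_odd_iff_even.mp heven)))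
      (hleft hj)
  refine ⟨hleft.antisymm fun j hj => ?_, hcard⟩
  by_contra hjD
  exact hodd j ((odd_card_erase_iff _ _).mpr (iff_of_false hjD (Nat.not_even_iff_odd.mpr hcard)))
    hj

theorem disjSum_compl_subset_of_toLeft_nonempty (hsub : D ∪ oddN (kkmk k) D ⊆ ω.disjSum ωᶜ)
    (hD : D.toLeft.Nonempty) : ω.disjSum ωᶜ ⊆ D ∪ oddN (kkmk k) D := by
  obtain ⟨rfl, hcard⟩ := toLeft_eq_of_subset_disjSum_compl hsub hD
  rintro (i | j) h
  · exact mem_union_left _ (by simpa using h)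
  · rw [inr_mem_disjSum, mem_compl] at h
    exact mem_union_right _ ((mem_oddN_kkmk_inr D j).mpr
      ((odd_card_erase_iff _ _).mpr (iff_of_false h (Nat.not_even_iff_odd.mpr hcard))))

theorem image_kkmkSwap_disjSum : (ω.disjSum ωᶜ).image (kkmkSwap k) = ωᶜ.disjSum ωᶜᶜ := by
  rw [compl_compl]
  ext (i | j) <;> simp [kkmkSwap]

theorem toLeft_image_kkmkSwap : (D.image (kkmkSwap k)).toLeft = D.toRight := by
  ext
  simp [kkmkSwap]

theorem disjSum_compl_subset (hsub : D ∪ oddN (kkmk k) D ⊆ ω.disjSum ωᶜ) (hD : D.Nonempty) :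
    ω.disjSum ωᶜ ⊆ D ∪ oddN (kkmk k) D := by
  have hparts : D.toLeft.Nonempty ∨ D.toRight.Nonempty := by
    obtain ⟨x | x, hx⟩ := hD
    exacts [.inl ⟨x, mem_toLeft.mpr hx⟩, .inr ⟨x, mem_toRight.mpr hx⟩]
  rcases hparts with hleft | hright
  · exact disjSum_compl_subset_of_toLeft_nonempty hsub hleft
  have hsub' : D.image (kkmkSwap k) ∪ oddN (kkmk k) (D.image (kkmkSwap k)) ⊆ ωᶜ.disjSum ωᶜᶜ := by
    rw [oddN_image_iso, ← image_union, ← image_kkmkSwap_disjSum]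
    exact image_subset_image hsub
  have hswap := disjSum_compl_subset_of_toLeft_nonempty hsub'
    (by rwa [toLeft_image_kkmkSwap])
  rw [← image_kkmkSwap_disjSum, oddN_image_iso, ← image_union] at hswap
  exact (image_subset_image_iff (kkmkSwap k).injective).mp hswap

end kkmk

theorem isMinimalLocalSet_kkmk_disjSum_compl {k : ℕ} {ω : Finset (Fin k)} (hω : Odd #ω) :
    IsMinimalLocalSet (kkmk k) (ω.disjSum ωᶜ) := by
  refine ⟨⟨ω.image Sum.inl, (card_pos.mp hω.pos).image _, ?_⟩, ?_⟩
  · ext (i | j) <;> simp [oddN_kkmk_image_inl hω]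
  · rintro _ ⟨D, hD, rfl⟩ hsub
    -- `IsLocalSet` forms its unions with the classical `DecidableEq` instance.
    exact hsub.antisymm (@disjSum_compl_subset k (Classical.decEq _) ω D hsub hD)

/-- In `K_{k,k} Δ M_k`, every odd-cardinality subset `ω` of the left side generates
a minimal local set, namely `{u_i : i ∈ ω} ∪ {v_j : j ∉ ω}`; hence the graph has at
least `2^(k-1)` minimal local sets. -/
theorem stmt_13 (k : ℕ) (hk : 1 ≤ k) :
    (∀ ω : Finset (Fin k), Odd ω.card →
      (ω.image Sum.inl ∪ ωᶜ.image Sum.inr : Finset (Fin k ⊕ Fin k)) =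
          ω.image Sum.inl ∪ oddN (kkmk k) (ω.image Sum.inl) ∧
        IsMinimalLocalSet (kkmk k) (ω.image Sum.inl ∪ ωᶜ.image Sum.inr)) ∧
    2 ^ (k - 1) ≤
      {L : Finset (Fin k ⊕ Fin k) | IsMinimalLocalSet (kkmk k) L}.ncard := by
  refine ⟨fun ω hω => ⟨by rw [oddN_kkmk_image_inl hω], ?_⟩, ?_⟩
  · rw [image_inl_union_image_inr]
    exact isMinimalLocalSet_kkmk_disjSum_compl hω
  have : Nonempty (Fin k) := ⟨⟨0, hk⟩⟩
  have hinj : Function.Injective fun ω : Finset (Fin k) => ω.disjSum ωᶜ := fun s t h => by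
    simpa using congrArg toLeft h
  set oddSets : Finset (Finset (Fin k)) := {ω | Odd #ω}
  calc 2 ^ (k - 1) = #oddSets := by rw [card_filter_odd_card, Fintype.card_fin]
    _ = #(oddSets.image fun ω => ω.disjSum ωᶜ) := (card_image_of_injective _ hinj).symm
    _ = (↑(oddSets.image fun ω => ω.disjSum ωᶜ) : Set (Finset (Fin k ⊕ Fin k))).ncard :=
        (Set.ncard_coe_finset _).symm
    _ ≤ {L : Finset (Fin k ⊕ Fin k) | IsMinimalLocalSet (kkmk k) L}.ncard := by
        refine Set.ncard_le_ncard ?_ (Set.toFinite _)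
        intro L hL
        obtain ⟨ω, hω, rfl⟩ := mem_image.mp (mem_coe.mp hL)
        exact isMinimalLocalSet_kkmk_disjSum_compl (mem_filter.mp hω).2
end

section
/- Local complementations at two non-adjacent vertices commute: if u is not adjacent to v in G, then (G ⋆ u) ⋆ v = (G ⋆ v) ⋆ u. -/
open scoped Classical

/-- Local complementation of `G` at a vertex `u`: toggle all edges between
distinct neighbors of `u`. -/
def localComp {V : Type*} (G : SimpleGraph V) (u : V) : SimpleGraph V where
  Adj x y := Xor' (G.Adj x y) (x ≠ y ∧ G.Adj u x ∧ G.Adj u y)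
  symm := ⟨by
    intro x y h
    have h1 := G.adj_comm x y
    have h2 : (y ≠ x) ↔ (x ≠ y) := ne_comm
    simp only [Xor', Xor] at h ⊢
    tauto⟩
  loopless := ⟨by
    intro x h
    rcases h with ⟨h1, -⟩ | ⟨⟨h1, -, -⟩, -⟩
    · exact G.loopless.irrefl x h1
    · exact h1 rfl⟩

/-! Since `u ≁ v`, complementing at `u` does not change the neighbourhood of `v` (and vice
versa), so both sides toggle the same two sets of edges, in either order. -/

theorem xor_right_comm (a b c : Prop) : Xor (Xor a b) c ↔ Xor (Xor a c) b := by
  grind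

section LocalComp

variable {V : Type*} (G : SimpleGraph V)

theorem localComp_adj {u x y : V} :
    (localComp G u).Adj x y ↔ Xor (G.Adj x y) (x ≠ y ∧ G.Adj u x ∧ G.Adj u y) :=
  Iff.rfl

theorem localComp_adj_of_not_adj {u v : V} (h : ¬G.Adj u v) (w : V) :
    (localComp G u).Adj v w ↔ G.Adj v w := by
  simp [localComp_adj, h, xor_comm _ False]

theorem localComp_localComp_adj_of_not_adj {u v : V} (h : ¬G.Adj u v) (x y : V) :
    (localComp (localComp G u) v).Adj x y ↔
      Xor (Xor (G.Adj x y) (x ≠ y ∧ G.Adj u x ∧ G.Adj u y)) (x ≠ y ∧ G.Adj v x ∧ G.Adj v y) := by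
  rw [localComp_adj, localComp_adj_of_not_adj G h, localComp_adj_of_not_adj G h, localComp_adj]

end LocalComp

/-- Local complementations at two non-adjacent vertices commute. -/
theorem stmt_15 {V : Type*} (G : SimpleGraph V) (u v : V) (h : ¬ G.Adj u v) :
    localComp (localComp G u) v = localComp (localComp G v) u := by
  ext x y
  rw [localComp_localComp_adj_of_not_adj G h, localComp_localComp_adj_of_not_adj G (mt .symm h)]
  exact xor_right_comm _ _ _
end
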